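/- arXiv:2105.09912 — 13 statements merged into one kernel-verified Lean document; each statement's English description precedes it below -/
import Mathlib

section
/- Let N ≥ 1, let Δ = diag(δ₁,…,δ_N) with δᵢ > 0 for all i, let x ∈ ℝᴺ, and let y ∈ ℝᴺ with yᵢ ≥ 0 for all i. Then the matrix A = −Δ + x yᵀ is diagonally stable if and only if ∑_{i=1}^{N} (1/δᵢ)·[xᵢ yᵢ]₊ < 1. -/
/-!
With `c = δ * d`, the symmetric part `-(Aᵀ D + D A) = 2 diag(c) - (y (d x)ᵀ + (d x) yᵀ)` is a
diagonal matrix minus a symmetric rank-two matrix. After the substitution `w = √c v` the largest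
eigenvalue of `a bᵀ + b aᵀ` is `⟪a, b⟫ + ‖a‖ ‖b‖`, so `D` works iff
`∑ xᵢ yᵢ / δᵢ + ‖y / √c‖ ‖d x / √c‖ < 2`. The first term does not depend on `d`, and by
Cauchy–Schwarz the infimum of the second over `d > 0` is `∑ |xᵢ yᵢ| / δᵢ`, approached by
`dᵢ = (|yᵢ| + ε) / (|xᵢ| + ε)` as `ε → 0⁺`. Finally `t + |t| = 2 [t]₊`.
-/

open Matrix

/-- A real square matrix `A` is *diagonally stable* if there exists a diagonal matrix `D`
with positive diagonal entries such that `Aᵀ D + D A` is negative definite. -/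
def DiagonallyStable {n : Type*} [Fintype n] [DecidableEq n] (A : Matrix n n ℝ) : Prop :=
  ∃ d : n → ℝ, (∀ i, 0 < d i) ∧
    (-(Aᵀ * Matrix.diagonal d + Matrix.diagonal d * A)).PosDef

open Filter Topology
open scoped InnerProductSpace

section InnerProductSpace

variable {E : Type*} [NormedAddCommGroup E] [InnerProductSpace ℝ E]

lemma norm_norm_smul_add_norm_smul_sq (a b : E) :
    ‖‖b‖ • a + ‖a‖ • b‖ ^ 2 = 2 * (‖a‖ * ‖b‖) * (⟪a, b⟫_ℝ + ‖a‖ * ‖b‖) := by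
  rw [norm_add_sq_real, norm_smul, norm_smul, real_inner_smul_left, real_inner_smul_right]
  simp only [norm_norm]
  ring

lemma two_mul_inner_mul_inner_le (a b w : E) :
    2 * (⟪a, w⟫_ℝ * ⟪b, w⟫_ℝ) ≤ (⟪a, b⟫_ℝ + ‖a‖ * ‖b‖) * ‖w‖ ^ 2 := by
  rcases eq_or_ne a 0 with rfl | ha
  · simp
  rcases eq_or_ne b 0 with rfl | hb
  · simp
  -- Cauchy–Schwarz for `u`, after discarding the square of `⟪‖b‖ • a - ‖a‖ • b, w⟫`
  set u := ‖b‖ • a + ‖a‖ • b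
  have hpolar : ⟪u, w⟫_ℝ ^ 2 - ⟪‖b‖ • a - ‖a‖ • b, w⟫_ℝ ^ 2
      = 4 * (‖a‖ * ‖b‖) * (⟪a, w⟫_ℝ * ⟪b, w⟫_ℝ) := by
    simp only [u, inner_add_left, inner_sub_left, real_inner_smul_left]
    ring
  have hCS : ⟪u, w⟫_ℝ ^ 2 ≤ ‖u‖ ^ 2 * ‖w‖ ^ 2 := by
    rw [← mul_pow]
    exact sq_le_sq' (abs_le.mp (abs_real_inner_le_norm u w)).1 (real_inner_le_norm u w)
  rw [norm_norm_smul_add_norm_smul_sq] at hCS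
  have hab : 0 < 2 * (‖a‖ * ‖b‖) := by positivity
  refine le_of_mul_le_mul_left ?_ hab
  nlinarith [sq_nonneg ⟪‖b‖ • a - ‖a‖ • b, w⟫_ℝ]

theorem forall_inner_mul_inner_lt_norm_sq_iff (a b : E) :
    (∀ w ≠ 0, ⟪a, w⟫_ℝ * ⟪b, w⟫_ℝ < ‖w‖ ^ 2) ↔ ⟪a, b⟫_ℝ + ‖a‖ * ‖b‖ < 2 := by
  refine ⟨fun h ↦ ?_, fun hK w hw ↦ ?_⟩
  · by_contra! hK
    set K := ⟪a, b⟫_ℝ + ‖a‖ * ‖b‖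
    have hab : 1 ≤ ‖a‖ * ‖b‖ := by linarith [real_inner_le_norm a b]
    have hu := norm_norm_smul_add_norm_smul_sq a b
    -- `two_mul_inner_mul_inner_le` is an equality at `w = u`
    set u := ‖b‖ • a + ‖a‖ • b
    have hau : ⟪a, u⟫_ℝ = ‖a‖ * K := by
      simp only [u, K, inner_add_right, real_inner_smul_right, real_inner_self_eq_norm_sq]
      ring
    have hbu : ⟪b, u⟫_ℝ = ‖b‖ * K := by
      simp only [u, K, inner_add_right, real_inner_smul_right, real_inner_self_eq_norm_sq,
        real_inner_comm a b]
      ring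
    have hu0 : u ≠ 0 := by
      intro hu0
      rw [hu0, norm_zero] at hu
      nlinarith
    have := h u hu0
    rw [hau, hbu, hu] at this
    nlinarith
  · have := two_mul_inner_mul_inner_le a b w
    have : 0 < ‖w‖ ^ 2 := by positivity
    nlinarith

end InnerProductSpace

section Weighted

variable {n : Type*} [Fintype n]

theorem forall_dotProduct_mul_dotProduct_lt_iff (a b : n → ℝ) {c : n → ℝ} (hc : ∀ i, 0 < c i) :
    (∀ v ≠ 0, (a ⬝ᵥ v) * (b ⬝ᵥ v) < ∑ i, c i * v i ^ 2) ↔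
      ∑ i, a i * b i / c i + √(∑ i, a i ^ 2 / c i) * √(∑ i, b i ^ 2 / c i) < 2 := by
  set s : n → ℝ := fun i ↦ √(c i)
  have hs : ∀ i, s i ≠ 0 := fun i ↦ (Real.sqrt_pos.2 (hc i)).ne'
  have hs2 : ∀ i, s i ^ 2 = c i := fun i ↦ Real.sq_sqrt (hc i).le
  let e : (n → ℝ) → EuclideanSpace ℝ n := fun v ↦ WithLp.toLp 2 (s * v)
  have he : Function.Surjective e := fun w ↦ ⟨w / s, by ext i; simp [e, mul_div_cancel₀ _ (hs i)]⟩
  have he0 (v : n → ℝ) : e v = 0 ↔ v = 0 := by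
    simp [e, funext_iff, hs]
  have hinner (a v : n → ℝ) : ⟪WithLp.toLp 2 (a / s), e v⟫_ℝ = a ⬝ᵥ v := by
    rw [EuclideanSpace.inner_toLp_toLp, star_trivial]
    exact Finset.sum_congr rfl fun i _ ↦ by
      simp only [Pi.mul_apply, Pi.div_apply]
      field_simp [hs i]
  have hnorm (v : n → ℝ) : ‖e v‖ ^ 2 = ∑ i, c i * v i ^ 2 := by
    simp [e, EuclideanSpace.real_norm_sq_eq, mul_pow, hs2]
  have hnorm' (a : n → ℝ) : ‖WithLp.toLp 2 (a / s)‖ = √(∑ i, a i ^ 2 / c i) := by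
    simp [EuclideanSpace.norm_eq, div_pow, hs2]
  have hinner' : ⟪WithLp.toLp 2 (a / s), WithLp.toLp 2 (b / s)⟫_ℝ = ∑ i, a i * b i / c i := by
    rw [EuclideanSpace.inner_toLp_toLp, star_trivial]
    exact Finset.sum_congr rfl fun i _ ↦ by
      simp only [Pi.div_apply, ← hs2 i]
      field_simp [hs i]
  rw [← hinner', ← hnorm', ← hnorm', ← forall_inner_mul_inner_lt_norm_sq_iff, he.forall]
  simp only [ne_eq, he0, hinner, hnorm]

lemma dotProduct_two_smul_diagonal_sub_mulVec [DecidableEq n] (a b c v : n → ℝ) :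
    v ⬝ᵥ (((2 : ℝ) • diagonal c - (vecMulVec a b + vecMulVec b a)) *ᵥ v)
      = 2 * (∑ i, c i * v i ^ 2 - (a ⬝ᵥ v) * (b ⬝ᵥ v)) := by
  have hdiag : v ⬝ᵥ (diagonal c *ᵥ v) = ∑ i, c i * v i ^ 2 := by
    simp only [dotProduct, mulVec_diagonal]
    exact Finset.sum_congr rfl fun i _ ↦ by ring
  simp only [sub_mulVec, add_mulVec, smul_mulVec, vecMulVec_mulVec, dotProduct_sub,
    dotProduct_add, dotProduct_smul, MulOpposite.smul_eq_mul_unop, MulOpposite.unop_op, hdiag,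
    smul_eq_mul]
  rw [dotProduct_comm v a, dotProduct_comm v b]
  ring

omit [Fintype n] in
lemma isHermitian_two_smul_diagonal_sub [DecidableEq n] (a b c : n → ℝ) :
    ((2 : ℝ) • diagonal c - (vecMulVec a b + vecMulVec b a)).IsHermitian := by
  simp only [IsHermitian, conjTranspose_sub, conjTranspose_smul, conjTranspose_add,
    conjTranspose_vecMulVec, diagonal_conjTranspose, star_trivial, add_comm]

theorem posDef_two_smul_diagonal_sub_iff [DecidableEq n] (a b : n → ℝ) {c : n → ℝ}
    (hc : ∀ i, 0 < c i) :
    ((2 : ℝ) • diagonal c - (vecMulVec a b + vecMulVec b a)).PosDef ↔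
      ∑ i, a i * b i / c i + √(∑ i, a i ^ 2 / c i) * √(∑ i, b i ^ 2 / c i) < 2 := by
  rw [posDef_iff_dotProduct_mulVec, ← forall_dotProduct_mul_dotProduct_lt_iff a b hc]
  simp only [isHermitian_two_smul_diagonal_sub, true_and, star_trivial,
    dotProduct_two_smul_diagonal_sub_mulVec]
  exact forall₂_congr fun v _ ↦ by constructor <;> intro h <;> linarith

lemma sum_abs_mul_div_le_sqrt_mul_sqrt (a b : n → ℝ) {c : n → ℝ} (hc : ∀ i, 0 < c i) :
    ∑ i, |a i * b i| / c i ≤ √(∑ i, a i ^ 2 / c i) * √(∑ i, b i ^ 2 / c i) := by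
  have hc2 (i : n) : √(c i) ^ 2 = c i := Real.sq_sqrt (hc i).le
  calc ∑ i, |a i * b i| / c i = ∑ i, |a i| / √(c i) * (|b i| / √(c i)) :=
        Finset.sum_congr rfl fun i _ ↦ by
          rw [abs_mul, div_mul_div_comm, Real.mul_self_sqrt (hc i).le]
    _ ≤ √(∑ i, (|a i| / √(c i)) ^ 2) * √(∑ i, (|b i| / √(c i)) ^ 2) :=
        Real.sum_mul_le_sqrt_mul_sqrt _ _ _
    _ = √(∑ i, a i ^ 2 / c i) * √(∑ i, b i ^ 2 / c i) := by simp only [div_pow, sq_abs, hc2]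

lemma sq_div_mul_div_le (u v : ℝ) {δ ε : ℝ} (hδ : 0 < δ) (hε : 0 < ε) :
    u ^ 2 / (δ * ((|u| + ε) / (|v| + ε))) ≤ |u| * (|v| + ε) / δ := by
  have hu : 0 < |u| + ε := by positivity
  calc u ^ 2 / (δ * ((|u| + ε) / (|v| + ε))) = |u| * (|v| + ε) / δ * (|u| / (|u| + ε)) := by
        rw [← sq_abs]; field_simp
    _ ≤ |u| * (|v| + ε) / δ * 1 := by
        gcongr
        exact div_le_one_of_le₀ (by linarith) hu.le
    _ = |u| * (|v| + ε) / δ := mul_one _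

lemma exists_pos_sqrt_mul_sqrt_lt (x y : n → ℝ) {δ : n → ℝ} (hδ : ∀ i, 0 < δ i) {T : ℝ}
    (hT : ∑ i, |x i * y i| / δ i < T) :
    ∃ d : n → ℝ, (∀ i, 0 < d i) ∧
      √(∑ i, y i ^ 2 / (δ i * d i)) * √(∑ i, (d i * x i) ^ 2 / (δ i * d i)) < T := by
  set F : ℝ → ℝ := fun ε ↦ ∑ i, |y i| * (|x i| + ε) / δ i
  set G : ℝ → ℝ := fun ε ↦ ∑ i, |x i| * (|y i| + ε) / δ i
  have hFG : √(F 0) * √(G 0) = ∑ i, |x i * y i| / δ i := by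
    have hG : G 0 = F 0 := by simp only [F, G, add_zero, mul_comm]
    rw [hG, Real.mul_self_sqrt (Finset.sum_nonneg fun i _ ↦ by have := hδ i; positivity)]
    simp only [add_zero, abs_mul, mul_comm]
  have hlim : Tendsto (fun ε ↦ √(F ε) * √(G ε)) (𝓝[>] 0) (𝓝 (√(F 0) * √(G 0))) :=
    tendsto_nhdsWithin_of_tendsto_nhds
      (by fun_prop : Continuous fun ε ↦ √(F ε) * √(G ε)).continuousAt
  rw [hFG] at hlim
  obtain ⟨ε, hεT, hε⟩ := ((hlim.eventually (gt_mem_nhds hT)).and self_mem_nhdsWithin).exists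
  refine ⟨fun i ↦ (|y i| + ε) / (|x i| + ε), fun i ↦ by simp only; positivity, ?_⟩
  refine lt_of_le_of_lt (mul_le_mul (Real.sqrt_le_sqrt ?_) (Real.sqrt_le_sqrt ?_)
    (Real.sqrt_nonneg _) (Real.sqrt_nonneg _)) hεT <;> refine Finset.sum_le_sum fun i _ ↦ ?_
  · exact sq_div_mul_div_le (y i) (x i) (hδ i) hε
  · calc _ = x i ^ 2 / (δ i * ((|x i| + ε) / (|y i| + ε))) := by
          have : 0 < |x i| + ε := by positivity
          have : 0 < |y i| + ε := by positivity
          field_simp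
      _ ≤ _ := sq_div_mul_div_le (x i) (y i) (hδ i) hε

lemma sum_div_add_sum_abs_div (t δ : n → ℝ) :
    ∑ i, t i / δ i + ∑ i, |t i| / δ i = 2 * ∑ i, 1 / δ i * max (t i) 0 := by
  rw [← Finset.sum_add_distrib, Finset.mul_sum]
  refine Finset.sum_congr rfl fun i _ ↦ ?_
  rcases le_total (t i) 0 with h | h
  · rw [max_eq_right h, abs_of_nonpos h]; ring
  · rw [max_eq_left h, abs_of_nonneg h]; ring

lemma neg_transpose_mul_diagonal_add_diagonal_mul [DecidableEq n] (δ d x y : n → ℝ) :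
    -((-diagonal δ + vecMulVec x y)ᵀ * diagonal d + diagonal d * (-diagonal δ + vecMulVec x y))
      = (2 : ℝ) • diagonal (δ * d) - (vecMulVec y (d * x) + vecMulVec (d * x) y) := by
  ext i j
  simp only [transpose_add, transpose_neg, diagonal_transpose, transpose_vecMulVec,
    Matrix.neg_apply, Matrix.add_apply, Matrix.sub_apply, Matrix.smul_apply, mul_diagonal,
    diagonal_mul, vecMulVec_apply, diagonal_apply, Pi.mul_apply, smul_eq_mul]
  split_ifs with h
  · subst h; ring
  · ring

end Weighted

theorem rank1_diagonal_stability_general (N : ℕ) (δ x y : Fin N → ℝ)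
    (hδ : ∀ i, 0 < δ i) :
    DiagonallyStable (-(Matrix.diagonal δ) + Matrix.vecMulVec x y) ↔
      ∑ i, (1 / δ i) * max (x i * y i) 0 < 1 := by
  set P := ∑ i, x i * y i / δ i
  have hc (d : Fin N → ℝ) (hd : ∀ i, 0 < d i) (i : Fin N) : 0 < (δ * d) i := mul_pos (hδ i) (hd i)
  have hcrit (d : Fin N → ℝ) (hd : ∀ i, 0 < d i) :
      ((2 : ℝ) • diagonal (δ * d) - (vecMulVec y (d * x) + vecMulVec (d * x) y)).PosDef ↔
        P + √(∑ i, y i ^ 2 / (δ i * d i)) * √(∑ i, (d i * x i) ^ 2 / (δ i * d i)) < 2 := by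
    have hP : ∑ i, y i * (d * x) i / (δ * d) i = P := Finset.sum_congr rfl fun i _ ↦ by
      simp only [Pi.mul_apply]
      field_simp [(hd i).ne']
    rw [posDef_two_smul_diagonal_sub_iff y (d * x) (hc d hd), hP]
    rfl
  have hbound (d : Fin N → ℝ) (hd : ∀ i, 0 < d i) : ∑ i, |x i * y i| / δ i ≤
      √(∑ i, y i ^ 2 / (δ i * d i)) * √(∑ i, (d i * x i) ^ 2 / (δ i * d i)) := by
    refine le_of_eq_of_le (Finset.sum_congr rfl fun i _ ↦ ?_)
      (sum_abs_mul_div_le_sqrt_mul_sqrt y (d * x) (hc d hd))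
    simp only [Pi.mul_apply, abs_mul, abs_of_pos (hd i)]
    field_simp [(hd i).ne']
  simp only [DiagonallyStable, neg_transpose_mul_diagonal_add_diagonal_mul]
  rw [← mul_lt_mul_iff_right₀ two_pos, mul_one, ← sum_div_add_sum_abs_div]
  constructor
  · rintro ⟨d, hd, hdef⟩
    linarith [(hcrit d hd).1 hdef, hbound d hd]
  · intro h
    obtain ⟨d, hd, hlt⟩ := exists_pos_sqrt_mul_sqrt_lt x y hδ (T := 2 - P) (by linarith)
    exact ⟨d, hd, (hcrit d hd).2 (by linarith)⟩

/-- `A = -Δ + x yᵀ` with `Δ = diag(δ)`, `δᵢ > 0`, `yᵢ ≥ 0`, is diagonally stable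
iff `∑ᵢ (1/δᵢ)[xᵢ yᵢ]₊ < 1`. -/
theorem rank1_diagonal_stability (N : ℕ) (hN : 1 ≤ N) (δ x y : Fin N → ℝ)
    (hδ : ∀ i, 0 < δ i) (hy : ∀ i, 0 ≤ y i) :
    DiagonallyStable (-(Matrix.diagonal δ) + Matrix.vecMulVec x y) ↔
      ∑ i, (1 / δ i) * max (x i * y i) 0 < 1 :=
  rank1_diagonal_stability_general N δ x y hδ
end

section
/- Let N ≥ 1, let Δ = diag(δ₁,…,δ_N) with δᵢ > 0 for all i, let x ∈ ℝᴺ with xᵢ ≠ 0 for all i, and let y ∈ ℝᴺ with yᵢ > 0 for all i. Suppose ∑_{i=1}^{N} (1/δᵢ)·[xᵢ yᵢ]₊ < 1, and set μ := 1 − ∑_{i=1}^{N} (1/δᵢ)·[xᵢ yᵢ]₊ > 0. Define the diagonal matrix D = diag(d₁,…,d_N) with dᵢ = yᵢ/|xᵢ|. Then the matrix A = −Δ + x yᵀ satisfies AᵀD + DA ⪯ −2μ·ΔD (i.e., AᵀD + DA + 2μΔD is negative semidefinite); in particular, A is diagonally stable with certificate D. -/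
open Matrix

/-!
With `P = ∑ yᵢvᵢ`, `Q = ∑ dᵢxᵢvᵢ` and `S = ∑ δᵢdᵢvᵢ²`, the quadratic form of `AᵀD + DA` is
`2 (Q P - S)`. Since `dᵢxᵢ = ±yᵢ` according to the sign of `xᵢ`, the mean `(P + Q) / 2` is
`∑_{xᵢ > 0} yᵢvᵢ`, and Cauchy–Schwarz with weights `[xᵢyᵢ]₊ / δᵢ` (an equality termwise) gives
`Q P ≤ ((P + Q) / 2)² ≤ (1 - μ) S`. Hence `-vᵀ(AᵀD + DA)v ≥ 2μ S`, and `S > 0` for `v ≠ 0`.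
-/

section

variable {n : Type*} [Fintype n]

lemma dotProduct_transpose_mul_add_mul_mulVec {M D : Matrix n n ℝ} (hD : Dᵀ = D) (v : n → ℝ) :
    v ⬝ᵥ ((Mᵀ * D + D * M) *ᵥ v) = 2 * ((D *ᵥ v) ⬝ᵥ (M *ᵥ v)) := by
  rw [add_mulVec, dotProduct_add, ← mulVec_mulVec, ← mulVec_mulVec, dotProduct_mulVec,
    dotProduct_mulVec v D, vecMul_transpose, ← mulVec_transpose, hD, dotProduct_comm]
  ring

lemma isHermitian_transpose_mul_add_mul {M D : Matrix n n ℝ} (hD : Dᵀ = D) :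
    (Mᵀ * D + D * M).IsHermitian := by
  rw [IsHermitian, conjTranspose_eq_transpose_of_trivial, transpose_add, transpose_mul,
    transpose_mul, transpose_transpose, hD, add_comm]

variable [DecidableEq n]

lemma diagonal_mulVec_dotProduct_neg_diagonal_add_vecMulVec (δ d x y v : n → ℝ) :
    (diagonal d *ᵥ v) ⬝ᵥ ((-diagonal δ + vecMulVec x y) *ᵥ v)
      = (∑ i, d i * x i * v i) * (y ⬝ᵥ v) - ∑ i, δ i * d i * v i ^ 2 := by
  rw [add_mulVec, neg_mulVec, vecMulVec_mulVec, dotProduct_add, dotProduct_neg,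
    op_smul_eq_smul, dotProduct_smul, smul_eq_mul, sub_eq_neg_add, mul_comm]
  simp only [mulVec_diagonal, dotProduct]
  congr 2 <;> exact Finset.sum_congr rfl fun i _ => by ring

lemma dotProduct_diagonal_mul_diagonal_mulVec (δ d v : n → ℝ) :
    v ⬝ᵥ ((diagonal δ * diagonal d) *ᵥ v) = ∑ i, δ i * d i * v i ^ 2 := by
  simp only [diagonal_mul_diagonal, mulVec_diagonal, dotProduct]
  exact Finset.sum_congr rfl fun i _ => by ring

end

lemma sq_half_add_div_abs_mul {δ x y : ℝ} (hδ : δ ≠ 0) (hx : x ≠ 0) (hy : 0 ≤ y) :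
    ((y + y / |x| * x) / 2) ^ 2 = 1 / δ * max (x * y) 0 * (δ * (y / |x|)) := by
  rcases hx.lt_or_gt with hx' | hx'
  · rw [abs_of_neg hx', max_eq_right (mul_nonpos_of_nonpos_of_nonneg hx'.le hy)]
    field_simp
    ring
  · rw [abs_of_pos hx', max_eq_left (mul_nonneg hx'.le hy)]
    field_simp
    ring

lemma sum_mul_dotProduct_le_sum_posPart_mul {ι : Type*} [Fintype ι] {δ x y d : ι → ℝ}
    (hδ : ∀ i, 0 < δ i) (hx : ∀ i, x i ≠ 0) (hy : ∀ i, 0 ≤ y i) (hd : ∀ i, d i = y i / |x i|)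
    (v : ι → ℝ) :
    (∑ i, d i * x i * v i) * (y ⬝ᵥ v)
      ≤ (∑ i, 1 / δ i * max (x i * y i) 0) * ∑ i, δ i * d i * v i ^ 2 := by
  set Q := ∑ i, d i * x i * v i
  set P := y ⬝ᵥ v
  have hmean : (Q + P) / 2 = ∑ i, (y i + d i * x i) / 2 * v i := by
    simp only [Q, P, dotProduct, ← Finset.sum_add_distrib, Finset.sum_div]
    exact Finset.sum_congr rfl fun i _ => by ring
  have hd_nonneg : ∀ i, 0 ≤ d i := fun i => hd i ▸ div_nonneg (hy i) (abs_nonneg _)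
  calc Q * P ≤ ((Q + P) / 2) ^ 2 := by nlinarith [sq_nonneg (Q - P)]
    _ = (∑ i, (y i + d i * x i) / 2 * v i) ^ 2 := by rw [hmean]
    _ ≤ _ := by
      refine Finset.sum_sq_le_sum_mul_sum_of_sq_le_mul _
        (fun i _ => mul_nonneg (one_div_nonneg.2 (hδ i).le) (le_max_right _ _))
        (fun i _ => by have := hd_nonneg i; have := hδ i; positivity) fun i _ => le_of_eq ?_
      rw [mul_pow, hd i, sq_half_add_div_abs_mul (hδ i).ne' (hx i) (hy i)]
      ring

theorem rank1_explicit_certificate_general (N : ℕ) (δ x y : Fin N → ℝ)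
    (hδ : ∀ i, 0 < δ i) (hx : ∀ i, x i ≠ 0) (hy : ∀ i, 0 < y i)
    (hsum : ∑ i, (1 / δ i) * max (x i * y i) 0 < 1)
    (μ : ℝ) (hμ : μ = 1 - ∑ i, (1 / δ i) * max (x i * y i) 0)
    (d : Fin N → ℝ) (hd : ∀ i, d i = y i / |x i|)
    (A D Δ : Matrix (Fin N) (Fin N) ℝ)
    (hA : A = -(Matrix.diagonal δ) + Matrix.vecMulVec x y)
    (hD : D = Matrix.diagonal d) (hΔ : Δ = Matrix.diagonal δ) :
    0 < μ ∧
    (-(Aᵀ * D + D * A + (2 * μ) • (Δ * D))).PosSemidef ∧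
    (-(Aᵀ * D + D * A)).PosDef := by
  have hμ_pos : 0 < μ := by linarith
  have hΔD : (Δ * D).PosDef := by
    rw [hΔ, hD, diagonal_mul_diagonal, posDef_diagonal_iff]
    exact fun i => mul_pos (hδ i) (hd i ▸ div_pos (hy i) (abs_pos.2 (hx i)))
  have hD_symm : Dᵀ = D := hD ▸ diagonal_transpose d
  have hpsd : (-(Aᵀ * D + D * A + (2 * μ) • (Δ * D))).PosSemidef := by
    refine .of_dotProduct_mulVec_nonneg
      ((isHermitian_transpose_mul_add_mul hD_symm).add (hΔD.smul (by positivity)).isHermitian).neg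
      fun v => ?_
    have hcross := sum_mul_dotProduct_le_sum_posPart_mul hδ hx (fun i => (hy i).le) hd v
    rw [star_trivial, neg_mulVec, dotProduct_neg, add_mulVec, dotProduct_add, smul_mulVec,
      dotProduct_smul, dotProduct_transpose_mul_add_mul_mulVec hD_symm, hA, hD, hΔ,
      diagonal_mulVec_dotProduct_neg_diagonal_add_vecMulVec,
      dotProduct_diagonal_mul_diagonal_mulVec, smul_eq_mul, hμ]
    linarith
  refine ⟨hμ_pos, hpsd, ?_⟩
  simpa using PosDef.posSemidef_add hpsd (hΔD.smul (by positivity : 0 < 2 * μ))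

/-- explicit diagonal Lyapunov certificate for the rank-1 case. -/
theorem rank1_explicit_certificate (N : ℕ) (hN : 1 ≤ N) (δ x y : Fin N → ℝ)
    (hδ : ∀ i, 0 < δ i) (hx : ∀ i, x i ≠ 0) (hy : ∀ i, 0 < y i)
    (hsum : ∑ i, (1 / δ i) * max (x i * y i) 0 < 1)
    (μ : ℝ) (hμ : μ = 1 - ∑ i, (1 / δ i) * max (x i * y i) 0)
    (d : Fin N → ℝ) (hd : ∀ i, d i = y i / |x i|)
    (A D Δ : Matrix (Fin N) (Fin N) ℝ)
    (hA : A = -(Matrix.diagonal δ) + Matrix.vecMulVec x y)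
    (hD : D = Matrix.diagonal d) (hΔ : Δ = Matrix.diagonal δ) :
    0 < μ ∧
    (-(Aᵀ * D + D * A + (2 * μ) • (Δ * D))).PosSemidef ∧
    (-(Aᵀ * D + D * A)).PosDef :=
  rank1_explicit_certificate_general N δ x y hδ hx hy hsum μ hμ d hd A D Δ hA hD hΔ
end

section
/- Let A ∈ ℝ^{n×n} be a block upper-triangular matrix A = [[A₁₁, A₁₂],[0, A₂₂]], where A₁₁ ∈ ℝ^{p×p}, A₂₂ ∈ ℝ^{q×q}, A₁₂ ∈ ℝ^{p×q}, and n = p + q. Then A is diagonally stable if and only if both A₁₁ and A₂₂ are diagonally stable. -/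
/-!
The forward direction restricts the positive definite matrix `-(AᵀD + DA)` to the two diagonal
index blocks. Conversely, for `D = diag(D₁, ε D₂)` that matrix has diagonal blocks
`M₁ = -(A₁₁ᵀD₁ + D₁A₁₁)` and `ε M₂ = -ε (A₂₂ᵀD₂ + D₂A₂₂)` and off-diagonal block `C = -D₁ A₁₂`.
By the Schur complement it is positive definite iff `ε M₂ - Cᵀ M₁⁻¹ C` is, which holds as soon
as `ε` times the least eigenvalue of `M₂` exceeds the largest eigenvalue of `Cᵀ M₁⁻¹ C`.
-/

open Matrix

open scoped MatrixOrder ComplexOrder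

namespace Matrix

variable {m n 𝕜 : Type*} [Fintype m] [Fintype n] [DecidableEq m] [DecidableEq n] [RCLike 𝕜]

theorem PosDef.posDef_fromBlocks₁₁_iff {A : Matrix m m 𝕜} (B : Matrix m n 𝕜) (D : Matrix n n 𝕜)
    (hA : A.PosDef) : (fromBlocks A B Bᴴ D).PosDef ↔ (D - Bᴴ * A⁻¹ * B).PosDef := by
  have := hA.isUnit.invertible
  rw [← invOf_eq_nonsing_inv]
  calc (fromBlocks A B Bᴴ D).PosDef
      ↔ (fromBlocks A B Bᴴ D).PosSemidef ∧ IsUnit (fromBlocks A B Bᴴ D) :=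
        ⟨fun h => ⟨h.posSemidef, h.isUnit⟩, fun h => h.1.posDef_iff_isUnit.2 h.2⟩
    _ ↔ (D - Bᴴ * ⅟A * B).PosSemidef ∧ IsUnit (D - Bᴴ * ⅟A * B) := by
        rw [hA.fromBlocks₁₁, isUnit_fromBlocks_iff_of_invertible₁₁, invOf_eq_nonsing_inv]
    _ ↔ (D - Bᴴ * ⅟A * B).PosDef :=
        ⟨fun h => h.1.posDef_iff_isUnit.2 h.2, fun h => ⟨h.posSemidef, h.isUnit⟩⟩

theorem IsHermitian.le_smul_one {C : Matrix n n 𝕜} (hC : C.IsHermitian) :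
    C ≤ (∑ i, |hC.eigenvalues i|) • (1 : Matrix n n 𝕜) := by
  rw [← Algebra.algebraMap_eq_smul_one]
  refine le_algebraMap_of_spectrum_le fun x hx => ?_
  obtain ⟨i, rfl⟩ := hC.spectrum_real_eq_range_eigenvalues ▸ hx
  exact (le_abs_self _).trans <| Finset.single_le_sum (f := fun j => |hC.eigenvalues j|)
    (fun j _ => abs_nonneg _) (Finset.mem_univ i)

theorem PosDef.exists_smul_one_le {M : Matrix n n 𝕜} (hM : M.PosDef) :
    ∃ r > (0 : ℝ), r • (1 : Matrix n n 𝕜) ≤ M := by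
  cases isEmpty_or_nonempty n
  · exact ⟨1, one_pos, le_of_eq (Subsingleton.elim _ _)⟩
  simp_rw [← Algebra.algebraMap_eq_smul_one]
  exact (CFC.exists_pos_algebraMap_le_iff hM.isHermitian).2 fun x hx =>
    hM.isStrictlyPositive.spectrum_pos hx

theorem PosDef.exists_smul_sub_posDef {M C : Matrix n n 𝕜} (hM : M.PosDef) (hC : C.IsHermitian) :
    ∃ ε > (0 : ℝ), (ε • M - C).PosDef := by
  obtain ⟨r, hr, hrM⟩ := hM.exists_smul_one_le
  set K := ∑ i, |hC.eigenvalues i|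
  have hK : 0 ≤ K := Finset.sum_nonneg fun i _ => abs_nonneg _
  refine ⟨(K + 1) / r, by positivity, ?_⟩
  have hle : (1 : Matrix n n 𝕜) ≤ ((K + 1) / r) • M - C :=
    calc (1 : Matrix n n 𝕜) = ((K + 1) / r) • (r • 1) - K • 1 := by
          rw [smul_smul, div_mul_cancel₀ _ hr.ne', add_smul, one_smul, add_sub_cancel_left]
      _ ≤ ((K + 1) / r) • M - C :=
          sub_le_sub (smul_le_smul_of_nonneg_left hrM (by positivity)) hC.le_smul_one
  simpa using PosDef.one.add_posSemidef (Matrix.le_iff.1 hle)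

end Matrix

section DiagonallyStable

variable {m n : Type*} [Fintype m] [Fintype n] [DecidableEq m] [DecidableEq n]

def negLyapunov (A : Matrix n n ℝ) (d : n → ℝ) : Matrix n n ℝ :=
  -(Aᵀ * diagonal d + diagonal d * A)

theorem negLyapunov_smul (A : Matrix n n ℝ) (c : ℝ) (d : n → ℝ) :
    negLyapunov A (c • d) = c • negLyapunov A d := by
  rw [negLyapunov, negLyapunov, diagonal_smul, Matrix.mul_smul, Matrix.smul_mul, ← smul_add,
    smul_neg]

theorem negLyapunov_fromBlocks_zero (A : Matrix m m ℝ) (B : Matrix m n ℝ) (D : Matrix n n ℝ)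
    (d₁ : m → ℝ) (d₂ : n → ℝ) :
    negLyapunov (fromBlocks A B 0 D) (Sum.elim d₁ d₂) =
      fromBlocks (negLyapunov A d₁) (-(diagonal d₁ * B)) (-(diagonal d₁ * B))ᴴ
        (negLyapunov D d₂) := by
  simp only [negLyapunov, ← fromBlocks_diagonal, fromBlocks_transpose, fromBlocks_multiply,
    fromBlocks_add, fromBlocks_neg, conjTranspose_eq_transpose_of_trivial, transpose_neg,
    transpose_mul, transpose_zero, diagonal_transpose, Matrix.mul_zero, Matrix.zero_mul,
    add_zero, zero_add]

theorem DiagonallyStable.of_fromBlocks_zero {A : Matrix m m ℝ} {B : Matrix m n ℝ}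
    {D : Matrix n n ℝ} (h : DiagonallyStable (fromBlocks A B 0 D)) :
    DiagonallyStable A ∧ DiagonallyStable D := by
  obtain ⟨d, hd, hL⟩ := h
  rw [← Sum.elim_comp_inl_inr d] at hL
  change (negLyapunov _ _).PosDef at hL
  rw [negLyapunov_fromBlocks_zero] at hL
  exact ⟨⟨_, fun i => hd _, hL.submatrix Sum.inl_injective⟩,
    ⟨_, fun i => hd _, hL.submatrix Sum.inr_injective⟩⟩

theorem DiagonallyStable.fromBlocks_zero {A : Matrix m m ℝ} (B : Matrix m n ℝ)
    {D : Matrix n n ℝ} (hA : DiagonallyStable A) (hD : DiagonallyStable D) :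
    DiagonallyStable (fromBlocks A B 0 D) := by
  obtain ⟨d₁, hd₁, hL₁⟩ := hA
  obtain ⟨d₂, hd₂, hL₂⟩ := hD
  set C := -(diagonal d₁ * B)
  obtain ⟨ε, hε, hSchur⟩ :=
    hL₂.exists_smul_sub_posDef (isHermitian_conjTranspose_mul_mul C hL₁.inv.isHermitian)
  refine ⟨Sum.elim d₁ (ε • d₂), ?_, ?_⟩
  · rintro (i | i)
    · exact hd₁ i
    · exact mul_pos hε (hd₂ i)
  · change (negLyapunov _ _).PosDef
    rw [negLyapunov_fromBlocks_zero, negLyapunov_smul]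
    exact (hL₁.posDef_fromBlocks₁₁_iff C _).2 hSchur

end DiagonallyStable

/-- a block upper-triangular matrix is diagonally stable iff both of its
diagonal blocks are diagonally stable. -/
theorem blockTriangular_diagonallyStable_iff (p q : ℕ)
    (A11 : Matrix (Fin p) (Fin p) ℝ) (A12 : Matrix (Fin p) (Fin q) ℝ)
    (A22 : Matrix (Fin q) (Fin q) ℝ) :
    DiagonallyStable (Matrix.fromBlocks A11 A12 0 A22) ↔
      DiagonallyStable A11 ∧ DiagonallyStable A22 :=
  ⟨DiagonallyStable.of_fromBlocks_zero, fun h => h.1.fromBlocks_zero A12 h.2⟩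
end

section
/- Let N ≥ 1, let Δ = diag(δ₁,…,δ_N) with δᵢ > 0 for all i, let x ∈ ℝᴺ with xᵢ ≠ 0 for all i, and let y ∈ ℝᴺ with yᵢ > 0 for all i. Suppose ∑_{i=1}^{N} (1/δᵢ)·[xᵢ yᵢ]₊ < 1 and set μ := 1 − ∑_{i=1}^{N} (1/δᵢ)·[xᵢ yᵢ]₊. Define dᵢ = yᵢ/|xᵢ| and D = diag(d₁,…,d_N). Let E ∈ ℝ^{N×N} with spectral norm ‖E‖₂ ≤ 1, and let σ ∈ ℝ satisfy |σ| < μ·(minᵢ dᵢδᵢ)/(maxᵢ dᵢ). Then the matrix A = −Δ + x yᵀ + σE satisfies AᵀD + DA ≺ 0; in particular, A is diagonally stable with certificate D. -/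
open Matrix

open scoped Matrix.Norms.L2Operator

/-!
For `z ≠ 0` write `S = ∑ dᵢ δᵢ zᵢ²`, so that `zᵀ D A z = -S + (yᵀz)(∑ dᵢ xᵢ zᵢ) + σ zᵀ D E z`.
Since `dᵢ xᵢ = ± yᵢ`, the rank-one term is `(P + Q)(P - Q) ≤ P²`, where `P` (resp. `Q`) collects
the `yᵢ zᵢ` with `xᵢ > 0` (resp. `xᵢ < 0`), and Cauchy–Schwarz with weights `xᵢ yᵢ / δᵢ` bounds
`P²` by `(1 - μ) S`. The perturbation is at most `|σ| (max dᵢ) ‖z‖²` and `S ≥ (min dᵢ δᵢ) ‖z‖²`,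
so `zᵀ D A z ≤ (|σ| max dᵢ - μ min dᵢ δᵢ) ‖z‖² < 0`.
-/

namespace Matrix

variable {n : Type*} [Fintype n]

lemma abs_dotProduct_mulVec_le [DecidableEq n] (B : Matrix n n ℝ) (z : n → ℝ) :
    |z ⬝ᵥ (B *ᵥ z)| ≤ ‖B‖ * (z ⬝ᵥ z) := by
  set v := (EuclideanSpace.equiv n ℝ).symm z
  have hv : ‖v‖ ^ 2 = z ⬝ᵥ z := by
    rw [← real_inner_self_eq_norm_sq]; rfl
  calc |z ⬝ᵥ (B *ᵥ z)| = |inner ℝ ((EuclideanSpace.equiv n ℝ).symm (B *ᵥ z)) v| := rfl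
    _ ≤ ‖(EuclideanSpace.equiv n ℝ).symm (B *ᵥ z)‖ * ‖v‖ := abs_real_inner_le_norm _ _
    _ ≤ ‖B‖ * ‖v‖ * ‖v‖ := by gcongr; exact B.l2_opNorm_mulVec v
    _ = ‖B‖ * (z ⬝ᵥ z) := by rw [mul_assoc, ← sq, hv]

lemma abs_dotProduct_diagonal_mul_mulVec_le [DecidableEq n] {d : n → ℝ} {M : ℝ} (hM₀ : 0 ≤ M)
    (hM : ∀ i, |d i| ≤ M) (E : Matrix n n ℝ) (z : n → ℝ) :
    |z ⬝ᵥ ((diagonal d * E) *ᵥ z)| ≤ M * ‖E‖ * (z ⬝ᵥ z) := by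
  have hdiag : ‖diagonal d‖ ≤ M := by
    rw [l2_opNorm_diagonal, pi_norm_le_iff_of_nonneg hM₀]
    exact hM
  calc |z ⬝ᵥ ((diagonal d * E) *ᵥ z)| ≤ ‖diagonal d * E‖ * (z ⬝ᵥ z) :=
        abs_dotProduct_mulVec_le _ z
    _ ≤ ‖diagonal d‖ * ‖E‖ * (z ⬝ᵥ z) := by
        gcongr
        · exact dotProduct_star_self_nonneg z
        · exact l2_opNorm_mul _ _
    _ ≤ M * ‖E‖ * (z ⬝ᵥ z) := by gcongr; exact dotProduct_star_self_nonneg z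

lemma posDef_neg_transpose_mul_add_mul_of_dotProduct_mulVec_neg {A D : Matrix n n ℝ}
    (hD : Dᵀ = D) (h : ∀ z ≠ 0, z ⬝ᵥ ((D * A) *ᵥ z) < 0) : (-(Aᵀ * D + D * A)).PosDef := by
  refine .of_dotProduct_mulVec_pos ?_ fun z hz => ?_
  · simp [IsHermitian, conjTranspose_eq_transpose_of_trivial, hD, add_comm]
  · have hsymm : z ⬝ᵥ ((Aᵀ * D) *ᵥ z) = z ⬝ᵥ ((D * A) *ᵥ z) := by
      rw [dotProduct_mulVec, ← transpose_transpose (Aᵀ * D), vecMul_transpose, dotProduct_comm,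
        transpose_mul, transpose_transpose, hD]
    have := h z hz
    simp only [star_trivial, neg_mulVec, add_mulVec, dotProduct_neg, dotProduct_add, hsymm]
    linarith

lemma dotProduct_diagonal_mul_mulVec_eq [DecidableEq n] (d δ x y z : n → ℝ) (σ : ℝ)
    (E : Matrix n n ℝ) :
    z ⬝ᵥ ((diagonal d * (-diagonal δ + vecMulVec x y + σ • E)) *ᵥ z)
      = -∑ i, d i * δ i * z i ^ 2 + (y ⬝ᵥ z) * ∑ i, d i * x i * z i
        + σ * (z ⬝ᵥ ((diagonal d * E) *ᵥ z)) := by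
  simp only [← mulVec_mulVec, add_mulVec, neg_mulVec, smul_mulVec, vecMulVec_mulVec,
    mulVec_diagonal, dotProduct, Pi.add_apply, Pi.neg_apply, Pi.smul_apply, smul_eq_mul,
    op_smul_eq_smul, Finset.mul_sum, ← Finset.sum_neg_distrib, ← Finset.sum_add_distrib]
  exact Finset.sum_congr rfl fun i _ => by ring

end Matrix

lemma sum_mul_sum_filter_sub_sum_filter_not_le_sq {ι : Type*} (s : Finset ι) (p : ι → Prop)
    [DecidablePred p] (w : ι → ℝ) :
    (∑ i ∈ s, w i) * (∑ i ∈ s with p i, w i - ∑ i ∈ s with ¬p i, w i)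
      ≤ (∑ i ∈ s with p i, w i) ^ 2 := by
  rw [← Finset.sum_filter_add_sum_filter_not s p]
  nlinarith [sq_nonneg (∑ i ∈ s with ¬p i, w i)]

section RankOne

variable {ι : Type*} [Fintype ι]

lemma sum_div_abs_mul_eq_sum_filter_sub {x : ι → ℝ} (hx : ∀ i, x i ≠ 0) (w : ι → ℝ) :
    ∑ i, w i / |x i| * x i = ∑ i with 0 < x i, w i - ∑ i with ¬0 < x i, w i := by
  rw [← Finset.sum_filter_add_sum_filter_not _ (fun i => 0 < x i), sub_eq_add_neg,
    ← Finset.sum_neg_distrib]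
  congr 1 <;> refine Finset.sum_congr rfl fun i hi => ?_ <;> rw [Finset.mem_filter] at hi
  · rw [abs_of_pos hi.2, div_mul_cancel₀ _ (hx i)]
  · rw [abs_of_neg (lt_of_le_of_ne (not_lt.mp hi.2) (hx i)), div_neg, neg_mul,
      div_mul_cancel₀ _ (hx i)]

lemma rankOne_quadratic_le {δ x y : ι → ℝ} (hδ : ∀ i, 0 < δ i) (hx : ∀ i, x i ≠ 0)
    (hy : ∀ i, 0 < y i) (z : ι → ℝ) :
    (y ⬝ᵥ z) * ∑ i, y i / |x i| * x i * z i
      ≤ (∑ i, 1 / δ i * max (x i * y i) 0) * ∑ i, y i / |x i| * δ i * z i ^ 2 := by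
  set S := Finset.univ.filter (fun i => 0 < x i)
  have hsplit : ∑ i, y i / |x i| * x i * z i
      = ∑ i ∈ S, y i * z i - ∑ i with ¬0 < x i, y i * z i := by
    rw [← sum_div_abs_mul_eq_sum_filter_sub hx]
    exact Finset.sum_congr rfl fun i _ => by ring
  have hweights : ∑ i, 1 / δ i * max (x i * y i) 0 = ∑ i ∈ S, x i * y i / δ i := by
    rw [Finset.sum_filter]
    refine Finset.sum_congr rfl fun i _ => ?_
    split_ifs with h
    · rw [max_eq_left (mul_pos h (hy i)).le]; ring
    · rw [max_eq_right (mul_nonpos_of_nonpos_of_nonneg (not_lt.mp h) (hy i).le), mul_zero]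
  have hcauchy : (∑ i ∈ S, y i * z i) ^ 2
      ≤ (∑ i ∈ S, x i * y i / δ i) * ∑ i ∈ S, y i / |x i| * δ i * z i ^ 2 := by
    refine Finset.sum_sq_le_sum_mul_sum_of_sq_le_mul S (fun i hi => ?_) (fun i hi => ?_)
      (fun i hi => ?_) <;> have hxi : 0 < x i := (Finset.mem_filter.mp hi).2 <;>
      have := hδ i <;> have := hy i
    · positivity
    · positivity
    · rw [abs_of_pos hxi]
      exact le_of_eq (by field_simp)
  have hsubset : ∑ i ∈ S, y i / |x i| * δ i * z i ^ 2 ≤ ∑ i, y i / |x i| * δ i * z i ^ 2 :=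
    Finset.sum_le_sum_of_subset_of_nonneg (Finset.filter_subset _ _) fun i _ _ => by
      have := hδ i; have := hy i; positivity
  have hnonneg : 0 ≤ ∑ i ∈ S, x i * y i / δ i := Finset.sum_nonneg fun i hi => by
    have hxi : 0 < x i := (Finset.mem_filter.mp hi).2
    have := hδ i; have := hy i; positivity
  calc (y ⬝ᵥ z) * ∑ i, y i / |x i| * x i * z i ≤ (∑ i ∈ S, y i * z i) ^ 2 := by
        rw [hsplit]; exact sum_mul_sum_filter_sub_sum_filter_not_le_sq _ _ _
    _ ≤ _ := hcauchy
    _ ≤ _ := by rw [hweights]; gcongr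

lemma posDef_neg_lyapunov_of_rankOne_perturbation [DecidableEq ι] {δ x y d : ι → ℝ}
    (hδ : ∀ i, 0 < δ i) (hx : ∀ i, x i ≠ 0) (hy : ∀ i, 0 < y i) (hd : ∀ i, d i = y i / |x i|)
    {μ m M σ : ℝ} (hμ : μ ≤ 1 - ∑ i, 1 / δ i * max (x i * y i) 0) (hμ₀ : 0 ≤ μ)
    (hm : ∀ i, m ≤ d i * δ i) (hM : ∀ i, d i ≤ M) (hσ : |σ| * M < μ * m)
    {E A : Matrix ι ι ℝ} (hE : ‖E‖ ≤ 1) (hA : A = -diagonal δ + vecMulVec x y + σ • E) :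
    (-(Aᵀ * diagonal d + diagonal d * A)).PosDef := by
  subst hA
  refine posDef_neg_transpose_mul_add_mul_of_dotProduct_mulVec_neg (diagonal_transpose d)
    fun z hz => ?_
  obtain ⟨j, -⟩ := Function.ne_iff.mp hz
  have hd₀ : ∀ i, 0 < d i := fun i => hd i ▸ div_pos (hy i) (abs_pos.mpr (hx i))
  have hZ : 0 < z ⬝ᵥ z := dotProduct_star_self_pos_iff.mpr hz
  set S := ∑ i, d i * δ i * z i ^ 2
  set T := z ⬝ᵥ ((diagonal d * E) *ᵥ z)
  have hS : m * (z ⬝ᵥ z) ≤ S := by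
    rw [dotProduct, Finset.mul_sum]
    exact Finset.sum_le_sum fun i _ => by
      rw [← sq]; exact mul_le_mul_of_nonneg_right (hm i) (sq_nonneg _)
  have hrankOne : (y ⬝ᵥ z) * ∑ i, d i * x i * z i ≤ (1 - μ) * S := by
    have hS₀ : 0 ≤ S := Finset.sum_nonneg fun i _ => by
      have := hd₀ i; have := hδ i; positivity
    simp only [S, hd] at hS₀ ⊢
    exact (rankOne_quadratic_le hδ hx hy z).trans (by gcongr; linarith)
  have hT : |T| ≤ M * (z ⬝ᵥ z) := by
    have hM₀ : 0 ≤ M := (hd₀ j).le.trans (hM j)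
    calc |T| ≤ M * ‖E‖ * (z ⬝ᵥ z) := abs_dotProduct_diagonal_mul_mulVec_le hM₀
          (fun i => (abs_of_pos (hd₀ i)).trans_le (hM i)) E z
      _ ≤ M * (z ⬝ᵥ z) := by nlinarith [mul_le_mul_of_nonneg_left hE hM₀]
  have hσT : σ * T ≤ |σ| * M * (z ⬝ᵥ z) :=
    (le_abs_self _).trans (by rw [abs_mul, mul_assoc]; gcongr)
  rw [dotProduct_diagonal_mul_mulVec_eq]
  calc -S + (y ⬝ᵥ z) * ∑ i, d i * x i * z i + σ * T ≤ -μ * S + |σ| * M * (z ⬝ᵥ z) := by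
        linarith
    _ ≤ (|σ| * M - μ * m) * (z ⬝ᵥ z) := by nlinarith [mul_le_mul_of_nonneg_left hS hμ₀]
    _ < 0 := mul_neg_of_neg_of_pos (by linarith) hZ

end RankOne

/-- robustness of the rank-1 certificate to perturbations `σ E`
with `‖E‖₂ ≤ 1` (spectral norm) and `|σ|` small enough. -/
theorem rank1_perturbed_diagonallyStable (N : ℕ) (hN : 1 ≤ N) (δ x y : Fin N → ℝ)
    (hδ : ∀ i, 0 < δ i) (hx : ∀ i, x i ≠ 0) (hy : ∀ i, 0 < y i)
    (hsum : ∑ i, (1 / δ i) * max (x i * y i) 0 < 1)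
    (μ : ℝ) (hμ : μ = 1 - ∑ i, (1 / δ i) * max (x i * y i) 0)
    (d : Fin N → ℝ) (hd : ∀ i, d i = y i / |x i|)
    (E : Matrix (Fin N) (Fin N) ℝ) (hE : ‖E‖ ≤ 1)
    (σ : ℝ)
    (hσ : |σ| < μ * (Finset.univ.inf' (Finset.univ_nonempty_iff.mpr ⟨⟨0, hN⟩⟩)
            (fun i => d i * δ i) /
          Finset.univ.sup' (Finset.univ_nonempty_iff.mpr ⟨⟨0, hN⟩⟩) (fun i => d i)))
    (A D : Matrix (Fin N) (Fin N) ℝ)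
    (hA : A = -(Matrix.diagonal δ) + Matrix.vecMulVec x y + σ • E)
    (hD : D = Matrix.diagonal d) :
    (-(Aᵀ * D + D * A)).PosDef := by
  set m := Finset.univ.inf' (Finset.univ_nonempty_iff.mpr ⟨⟨0, hN⟩⟩) (fun i => d i * δ i)
  set M := Finset.univ.sup' (Finset.univ_nonempty_iff.mpr ⟨⟨0, hN⟩⟩) (fun i => d i)
  have hM : 0 < M := by
    refine lt_of_lt_of_le ?_ (Finset.le_sup' d (Finset.mem_univ ⟨0, hN⟩))
    rw [hd]; exact div_pos (hy _) (abs_pos.mpr (hx _))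
  have hσM : |σ| * M < μ * m := by rwa [← mul_div_assoc, lt_div_iff₀ hM] at hσ
  subst hD
  exact posDef_neg_lyapunov_of_rankOne_perturbation hδ hx hy hd hμ.le (by linarith)
    (fun i => Finset.inf'_le _ (Finset.mem_univ i)) (fun i => Finset.le_sup' d (Finset.mem_univ i))
    hσM hE hA
end

section
/- Let N ≥ 1, let Δ = diag(δ₁,…,δ_N) with δᵢ > 0 for all i, and let σ₁ > σ₂ ≥ 0. Let u₁, v₁ ∈ ℝᴺ be unit vectors (‖u₁‖₂ = ‖v₁‖₂ = 1) such that every entry of v₁ is positive and every entry of u₁ is nonzero, and let E ∈ ℝ^{N×N} with spectral norm ‖E‖₂ ≤ σ₂. Define ρ := (minᵢ δᵢ·v_{1,i}/|u_{1,i}|)/(maxᵢ v_{1,i}/|u_{1,i}|). If σ₂ < ρ·(1 − σ₁·∑_{i=1}^{N} (1/δᵢ)·[u_{1,i} v_{1,i}]₊), then the matrix A = −Δ + σ₁·u₁v₁ᵀ + E is diagonally stable, with certificate D = diag(v_{1,i}/|u_{1,i}|). -/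
/-! With `D = diag d`, `dᵢ = vᵢ / |uᵢ|`, the quadratic form of `DA` splits as
`xᵀDAx = -∑ δᵢdᵢxᵢ² + σ₁ (x ⬝ Du)(v ⬝ x) + xᵀDEx`. Since `dᵢuᵢ = ±vᵢ`, AM-GM bounds the rank-one
term by `(∑_{uᵢ > 0} vᵢxᵢ)²`, and weighted Cauchy-Schwarz bounds that by `s ∑ δᵢdᵢxᵢ²` with
`s = ∑ [uᵢvᵢ]₊ / δᵢ`; the perturbation term is at most `‖D‖‖E‖‖x‖²`. With `m = min δᵢdᵢ` and
`M = max dᵢ = ‖D‖` this gives `xᵀDAx ≤ -(m (1 - σ₁ s) - σ₂ M) ‖x‖²`, and the coefficient is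
positive because `σ₂ < ρ (1 - σ₁ s)` with `ρ = m / M`.
-/

open Matrix

open scoped Matrix.Norms.L2Operator

namespace Matrix
variable {n : Type*} [Fintype n]

theorem dotProduct_mulVec_le_l2_opNorm_mul [DecidableEq n] (B : Matrix n n ℝ) (x : n → ℝ) :
    x ⬝ᵥ B *ᵥ x ≤ ‖B‖ * (x ⬝ᵥ x) := by
  have hx : ‖WithLp.toLp 2 x‖ ^ 2 = x ⬝ᵥ x := by
    rw [← real_inner_self_eq_norm_sq, EuclideanSpace.inner_eq_star_dotProduct]; rfl
  calc x ⬝ᵥ B *ᵥ x = inner ℝ (WithLp.toLp 2 (B *ᵥ x)) (WithLp.toLp 2 x) := by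
        rw [EuclideanSpace.inner_eq_star_dotProduct]; rfl
    _ ≤ ‖WithLp.toLp 2 (B *ᵥ x)‖ * ‖WithLp.toLp 2 x‖ := real_inner_le_norm _ _
    _ ≤ ‖B‖ * ‖WithLp.toLp 2 x‖ * ‖WithLp.toLp 2 x‖ := by
        gcongr; exact l2_opNorm_mulVec B _
    _ = ‖B‖ * (x ⬝ᵥ x) := by rw [mul_assoc, ← sq, hx]

theorem posDef_neg_transpose_mul_add_mul {A D : Matrix n n ℝ} (hD : Dᵀ = D)
    (h : ∀ x ≠ 0, x ⬝ᵥ (D * A) *ᵥ x < 0) : (-(Aᵀ * D + D * A)).PosDef := by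
  refine .of_dotProduct_mulVec_pos ?_ fun x hx => ?_
  · simp [IsHermitian, transpose_mul, hD, add_comm]
  · have hsymm : x ⬝ᵥ (Aᵀ * D) *ᵥ x = x ⬝ᵥ (D * A) *ᵥ x := by
      rw [← dotProduct_transpose_mulVec, transpose_mul, transpose_transpose, hD]
    simp only [star_trivial, neg_mulVec, add_mulVec, dotProduct_neg, dotProduct_add, hsymm]
    linarith [h x hx]

end Matrix

variable {n : Type*} [Fintype n]

theorem dotProduct_mul_dotProduct_le_sum_posPart_mul {δ d u v : n → ℝ} (hδ : ∀ i, 0 < δ i)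
    (hd : ∀ i, 0 ≤ d i) (hdu : ∀ i, d i * |u i| = v i) (x : n → ℝ) :
    (x ⬝ᵥ (d * u)) * (v ⬝ᵥ x) ≤
      (∑ i, 1 / δ i * max (u i * v i) 0) * ∑ i, δ i * d i * x i ^ 2 := by
  -- `d i * u i = ± v i`, so the half-sum `(d i * u i + v i) / 2` is `v i` where `u i > 0`, else `0`.
  set q : n → ℝ := fun i => (d i * u i + v i) / 2
  have hq : ∀ i, q i ^ 2 ≤ max (u i * v i) 0 * d i := by
    intro i
    rcases lt_trichotomy (u i) 0 with hu | hu | hu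
    · have hcancel : d i * u i + v i = 0 := by rw [← hdu i, abs_of_neg hu]; ring
      have hq0 : q i = 0 := by simp [q, hcancel]
      rw [hq0, sq, zero_mul]
      exact mul_nonneg (le_max_right _ _) (hd i)
    · have hv0 : v i = 0 := by rw [← hdu i, hu, abs_zero, mul_zero]
      simp [q, hu, hv0]
    · have hdu_pos : d i * u i = v i := by rw [← hdu i, abs_of_pos hu]
      have hqv : q i = d i * u i := by simp only [q, hdu_pos]; ring
      rw [hqv, ← hdu_pos, max_eq_left (mul_nonneg hu.le (mul_nonneg (hd i) hu.le))]
      exact le_of_eq (by ring)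
  have hsum : x ⬝ᵥ (d * u) + v ⬝ᵥ x = 2 * ∑ i, q i * x i := by
    simp only [dotProduct, Pi.mul_apply, q, Finset.mul_sum, ← Finset.sum_add_distrib]
    exact Finset.sum_congr rfl fun i _ => by ring
  have hCS : (∑ i, q i * x i) ^ 2 ≤
      (∑ i, 1 / δ i * max (u i * v i) 0) * ∑ i, δ i * d i * x i ^ 2 := by
    refine Finset.sum_sq_le_sum_mul_sum_of_sq_le_mul _
      (fun i _ => by have := hδ i; positivity) (fun i _ => by have := hδ i; have := hd i; positivity)
      fun i _ => ?_
    calc (q i * x i) ^ 2 = q i ^ 2 * x i ^ 2 := mul_pow _ _ _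
      _ ≤ max (u i * v i) 0 * d i * x i ^ 2 := by gcongr; exact hq i
      _ = 1 / δ i * max (u i * v i) 0 * (δ i * d i * x i ^ 2) := by
        field_simp [(hδ i).ne']
  have hAMGM := four_mul_le_sq_add (x ⬝ᵥ (d * u)) (v ⬝ᵥ x)
  rw [hsum] at hAMGM
  linarith

theorem dotProduct_diagonal_mul_mulVec_le [DecidableEq n] {δ d u v : n → ℝ} (hδ : ∀ i, 0 < δ i)
    (hd : ∀ i, 0 ≤ d i) (hdu : ∀ i, d i * |u i| = v i) {σ₁ : ℝ} (hσ₁ : 0 ≤ σ₁)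
    (E : Matrix n n ℝ) (x : n → ℝ) :
    x ⬝ᵥ (diagonal d * (-diagonal δ + σ₁ • vecMulVec u v + E)) *ᵥ x ≤
      -((1 - σ₁ * ∑ i, 1 / δ i * max (u i * v i) 0) * ∑ i, δ i * d i * x i ^ 2) +
        ‖d‖ * ‖E‖ * (x ⬝ᵥ x) := by
  have hexpand : x ⬝ᵥ (diagonal d * (-diagonal δ + σ₁ • vecMulVec u v + E)) *ᵥ x =
      -∑ i, δ i * d i * x i ^ 2 + σ₁ * ((x ⬝ᵥ (d * u)) * (v ⬝ᵥ x)) +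
        x ⬝ᵥ (diagonal d * E) *ᵥ x := by
    have hdiag : ∀ g w : n → ℝ, diagonal g *ᵥ w = g * w := fun g w => funext (mulVec_diagonal g w)
    have hquad : x ⬝ᵥ ((fun i => d i * δ i) * x) = ∑ i, δ i * d i * x i ^ 2 :=
      Finset.sum_congr rfl fun i _ => by simp only [Pi.mul_apply]; ring
    simp only [Matrix.mul_add, Matrix.mul_neg, Matrix.mul_smul, mul_vecMulVec, diagonal_mul_diagonal,
      add_mulVec, neg_mulVec, smul_mulVec, vecMulVec_mulVec, dotProduct_add, dotProduct_neg,
      dotProduct_smul, hdiag, smul_eq_mul, MulOpposite.smul_eq_mul_unop, MulOpposite.unop_op, hquad]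
  have hE : x ⬝ᵥ (diagonal d * E) *ᵥ x ≤ ‖d‖ * ‖E‖ * (x ⬝ᵥ x) := by
    refine (dotProduct_mulVec_le_l2_opNorm_mul _ x).trans ?_
    gcongr
    · exact dotProduct_self_star_nonneg x
    · exact (l2_opNorm_mul _ _).trans_eq (by rw [l2_opNorm_diagonal])
  rw [hexpand]
  linarith [mul_le_mul_of_nonneg_left (dotProduct_mul_dotProduct_le_sum_posPart_mul hδ hd hdu x) hσ₁]

theorem dominant_rank1_diagonallyStable_general (N : ℕ) (hN : 1 ≤ N) (δ u v : Fin N → ℝ)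
    (hδ : ∀ i, 0 < δ i) (σ₁ σ₂ : ℝ) (hσ : σ₁ > σ₂)
    (hv : ∀ i, 0 < v i) (hu : ∀ i, u i ≠ 0)
    (E : Matrix (Fin N) (Fin N) ℝ) (hE : ‖E‖ ≤ σ₂)
    (ρ : ℝ)
    (hρ : ρ = Finset.univ.inf' (Finset.univ_nonempty_iff.mpr ⟨⟨0, hN⟩⟩)
            (fun i => δ i * (v i / |u i|)) /
          Finset.univ.sup' (Finset.univ_nonempty_iff.mpr ⟨⟨0, hN⟩⟩) (fun i => v i / |u i|))
    (hcond : σ₂ < ρ * (1 - σ₁ * ∑ i, (1 / δ i) * max (u i * v i) 0))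
    (A D : Matrix (Fin N) (Fin N) ℝ)
    (hA : A = -(Matrix.diagonal δ) + σ₁ • Matrix.vecMulVec u v + E)
    (hD : D = Matrix.diagonal (fun i => v i / |u i|)) :
    (∀ i, 0 < v i / |u i|) ∧ (-(Aᵀ * D + D * A)).PosDef := by
  set d : Fin N → ℝ := fun i => v i / |u i|
  have hd : ∀ i, 0 < d i := fun i => div_pos (hv i) (abs_pos.mpr (hu i))
  have hdu : ∀ i, d i * |u i| = v i := fun i => div_mul_cancel₀ _ (abs_ne_zero.mpr (hu i))
  refine ⟨hd, ?_⟩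
  subst hA hD
  set s := ∑ i, 1 / δ i * max (u i * v i) 0
  have hne : (Finset.univ : Finset (Fin N)).Nonempty := Finset.univ_nonempty_iff.mpr ⟨⟨0, hN⟩⟩
  set m := Finset.univ.inf' hne fun i => δ i * d i
  set M := Finset.univ.sup' hne d
  have hm : 0 < m := (Finset.lt_inf'_iff hne).mpr fun i _ => mul_pos (hδ i) (hd i)
  have hM : 0 < M := (hd ⟨0, hN⟩).trans_le (Finset.le_sup' d (Finset.mem_univ _))
  have hdM : ‖d‖ ≤ M := (pi_norm_le_iff_of_nonneg hM.le).mpr fun i => by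
    rw [Real.norm_of_nonneg (hd i).le]; exact Finset.le_sup' d (Finset.mem_univ i)
  have hσ₂ : 0 ≤ σ₂ := (norm_nonneg E).trans hE
  have hmargin : σ₂ * M < m * (1 - σ₁ * s) := by
    rw [hρ, div_mul_eq_mul_div, lt_div_iff₀ hM] at hcond; linarith
  have hs : 0 < 1 - σ₁ * s := pos_of_mul_pos_right ((mul_nonneg hσ₂ hM.le).trans_lt hmargin) hm.le
  refine posDef_neg_transpose_mul_add_mul (diagonal_transpose d) fun x hx => ?_
  have hX : 0 < x ⬝ᵥ x := dotProduct_self_star_pos_iff.mpr hx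
  have hT : m * (x ⬝ᵥ x) ≤ ∑ i, δ i * d i * x i ^ 2 := by
    rw [dotProduct, Finset.mul_sum]
    exact Finset.sum_le_sum fun i _ => by
      rw [← sq]; gcongr; exact Finset.inf'_le _ (Finset.mem_univ i)
  calc _ ≤ -((1 - σ₁ * s) * ∑ i, δ i * d i * x i ^ 2) + ‖d‖ * ‖E‖ * (x ⬝ᵥ x) :=
        dotProduct_diagonal_mul_mulVec_le hδ (fun i => (hd i).le) hdu (by linarith) E x
    _ ≤ -((1 - σ₁ * s) * (m * (x ⬝ᵥ x))) + M * σ₂ * (x ⬝ᵥ x) := by gcongr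
    _ < 0 := by linarith [mul_lt_mul_of_pos_right hmargin hX]

/-- diagonal stability of a diagonal matrix plus an interconnection with a
strictly dominant rank-1 part `σ₁ u₁ v₁ᵀ` and remainder `E` with `‖E‖₂ ≤ σ₂`. -/
theorem dominant_rank1_diagonallyStable (N : ℕ) (hN : 1 ≤ N) (δ u v : Fin N → ℝ)
    (hδ : ∀ i, 0 < δ i) (σ₁ σ₂ : ℝ) (hσ : σ₁ > σ₂) (hσ₂ : 0 ≤ σ₂)
    (hu_unit : Real.sqrt (∑ i, u i ^ 2) = 1) (hv_unit : Real.sqrt (∑ i, v i ^ 2) = 1)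
    (hv : ∀ i, 0 < v i) (hu : ∀ i, u i ≠ 0)
    (E : Matrix (Fin N) (Fin N) ℝ) (hE : ‖E‖ ≤ σ₂)
    (ρ : ℝ)
    (hρ : ρ = Finset.univ.inf' (Finset.univ_nonempty_iff.mpr ⟨⟨0, hN⟩⟩)
            (fun i => δ i * (v i / |u i|)) /
          Finset.univ.sup' (Finset.univ_nonempty_iff.mpr ⟨⟨0, hN⟩⟩) (fun i => v i / |u i|))
    (hcond : σ₂ < ρ * (1 - σ₁ * ∑ i, (1 / δ i) * max (u i * v i) 0))
    (A D : Matrix (Fin N) (Fin N) ℝ)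
    (hA : A = -(Matrix.diagonal δ) + σ₁ • Matrix.vecMulVec u v + E)
    (hD : D = Matrix.diagonal (fun i => v i / |u i|)) :
    (∀ i, 0 < v i / |u i|) ∧ (-(Aᵀ * D + D * A)).PosDef :=
  dominant_rank1_diagonallyStable_general N hN δ u v hδ σ₁ σ₂ hσ hv hu E hE ρ hρ hcond A D hA hD
end

section
/- For α ∈ ℝ, consider the 2×2 matrix A_I = [[−1+α, α],[−α, −1−α]]. Then: (i) A_I is Hurwitz stable (all eigenvalues have negative real part) for every α ∈ ℝ; and (ii) A_I is diagonally stable if and only if |α| < 1. -/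
/-!
The matrix has trace `-2 < 0` and determinant `1 > 0`, which makes a real `2 × 2` matrix Hurwitz:
a nonreal root of `z ^ 2 - t z + d` has real part `t / 2`, and a real one cannot be `≥ 0`.
The `i`-th diagonal entry of `Aᵀ D + D A` is `2 dᵢ aᵢᵢ`, so diagonal stability forces every
`aᵢᵢ` to be negative, i.e. `|α| < 1`. Conversely, the off-diagonal part of `A` is skew-symmetric,
so `Aᵀ + A` is the diagonal matrix `2 diag(aᵢᵢ)` and `D = 1` already works.
-/

open Matrix

theorem Complex.re_neg_of_sq_sub_mul_add_eq_zero {t d : ℝ} (ht : t < 0) (hd : 0 < d) {z : ℂ}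
    (hz : z ^ 2 - t * z + d = 0) : z.re < 0 := by
  have hre : z.re ^ 2 - z.im ^ 2 - t * z.re + d = 0 := by
    simpa [sq] using congrArg Complex.re hz
  have him : z.im * (2 * z.re - t) = 0 := by
    have := congrArg Complex.im hz
    simp only [sq, sub_im, add_im, mul_im, ofReal_re, ofReal_im, zero_im] at this
    linear_combination this
  rcases mul_eq_zero.mp him with hy | hx
  · by_contra! hx
    nlinarith
  · linarith

theorem Matrix.re_neg_of_mem_spectrum_of_trace_neg_of_det_pos
    (A : Matrix (Fin 2) (Fin 2) ℝ) (ht : A.trace < 0) (hd : 0 < A.det) {z : ℂ}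
    (hz : z ∈ spectrum ℂ (A.map (algebraMap ℝ ℂ))) : z.re < 0 := by
  rw [mem_spectrum_iff_isRoot_charpoly, charpoly_fin_two, Polynomial.IsRoot.def] at hz
  refine Complex.re_neg_of_sq_sub_mul_add_eq_zero ht hd ?_
  simpa [trace_fin_two, det_fin_two] using hz

theorem DiagonallyStable.diag_neg {n : Type*} [Fintype n] [DecidableEq n] {A : Matrix n n ℝ}
    (h : DiagonallyStable A) (i : n) : A i i < 0 := by
  obtain ⟨d, hd, hP⟩ := h
  have : 0 < (-(Aᵀ * diagonal d + diagonal d * A)) i i := hP.diag_pos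
  rw [neg_apply, Matrix.add_apply, mul_diagonal, diagonal_mul, transpose_apply] at this
  nlinarith [hd i]

theorem diagonallyStable_iff_diag_neg {n : Type*} [Fintype n] [DecidableEq n]
    {A : Matrix n n ℝ} (hA : Aᵀ + A = diagonal fun i ↦ 2 * A i i) :
    DiagonallyStable A ↔ ∀ i, A i i < 0 := by
  refine ⟨DiagonallyStable.diag_neg, fun h ↦ ⟨fun _ ↦ 1, fun _ ↦ one_pos, ?_⟩⟩
  rw [diagonal_one, Matrix.mul_one, Matrix.one_mul, hA, diagonal_neg, posDef_diagonal_iff]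
  intro i
  linarith [h i]

/-- the 2×2 example matrix is Hurwitz stable for every `α`,
but diagonally stable iff `|α| < 1`. -/
theorem example_two_by_two (α : ℝ)
    (A : Matrix (Fin 2) (Fin 2) ℝ) (hA : A = !![-1 + α, α; -α, -1 - α]) :
    (∀ z : ℂ, z ∈ spectrum ℂ (A.map (algebraMap ℝ ℂ)) → z.re < 0) ∧
    (DiagonallyStable A ↔ |α| < 1) := by
  have htrace : A.trace = -2 := by rw [hA, trace_fin_two_of]; ring
  have hdet : A.det = 1 := by rw [hA, det_fin_two_of]; ring
  have hsymm : Aᵀ + A = diagonal fun i ↦ 2 * A i i := by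
    subst hA
    ext i j
    fin_cases i <;> fin_cases j <;> simp <;> ring
  refine ⟨fun z ↦ re_neg_of_mem_spectrum_of_trace_neg_of_det_pos A (by linarith) (by linarith),
    ?_⟩
  rw [diagonallyStable_iff_diag_neg hsymm, Fin.forall_fin_two, hA, abs_lt]
  simp only [of_apply, cons_val', cons_val_zero, cons_val_one, empty_val', cons_val_fin_one]
  constructor <;> rintro ⟨h₀, h₁⟩ <;> constructor <;> linarith
end

section
/- Let N ≥ 1 and let β₁,…,β_N > 0 and b₁,…,b_N > 0. Let Δf, ΔNI, Δu, ΔPᴸ ∈ ℝᴺ satisfy the synchronism condition Δf₁ = Δf₂ = ⋯ = Δf_N, the net interchange balance condition ∑_{k=1}^{N} ΔNI_k = 0, and the area balance equations Δu_k = ΔNI_k + β_k·Δf_k + ΔPᴸ_k for each k. Define ACE_k := ΔNI_k + b_k·Δf_k. Then the following three statements are equivalent: (1) Δu_k = ΔPᴸ_k for all k; (2) Δf_k = 0 and ΔNI_k = 0 for all k; (3) ACE_k = 0 for all k. -/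
open Matrix

/-- steady-state zeroing of the area control errors.  Under synchronism,
net interchange balance and the area balance equations, zeroing generation-load
mismatch, zeroing frequency and interchange deviations, and zeroing all ACEs
are equivalent. -/
theorem ace_steady_state_equivalence (N : ℕ) (hN : 1 ≤ N)
    (β b Δf ΔNI Δu ΔPL : Fin N → ℝ)
    (hβ : ∀ k, 0 < β k) (hb : ∀ k, 0 < b k)
    (hsync : ∀ k l, Δf k = Δf l)
    (hbal : ∑ k, ΔNI k = 0)
    (harea : ∀ k, Δu k = ΔNI k + β k * Δf k + ΔPL k)
    (ACE : Fin N → ℝ) (hACE : ∀ k, ACE k = ΔNI k + b k * Δf k) :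
    ((∀ k, Δu k = ΔPL k) ↔ (∀ k, Δf k = 0 ∧ ΔNI k = 0)) ∧
    ((∀ k, Δf k = 0 ∧ ΔNI k = 0) ↔ (∀ k, ACE k = 0)) := by
  have k0 : Fin N := ⟨0, hN⟩
  have key : ∀ (c : Fin N → ℝ), (∀ k, 0 < c k) → (∀ k, ΔNI k + c k * Δf k = 0) →
      ∀ k, Δf k = 0 ∧ ΔNI k = 0 := by
    intro c hc h
    have hsum : ∑ k, (ΔNI k + c k * Δf k) = 0 := by simp [h]
    rw [Finset.sum_add_distrib, hbal, zero_add] at hsum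
    have hcf : (∑ k, c k) * Δf k0 = 0 := by
      rw [Finset.sum_mul, ← hsum]
      exact Finset.sum_congr rfl fun k _ => by rw [hsync k k0]
    have hcpos : 0 < ∑ k, c k :=
      Finset.sum_pos (fun k _ => hc k) ⟨k0, Finset.mem_univ k0⟩
    have hf0 : Δf k0 = 0 := by
      rcases mul_eq_zero.mp hcf with h' | h'
      · exact absurd h' (ne_of_gt hcpos)
      · exact h'
    intro k
    have hfk : Δf k = 0 := (hsync k k0).trans hf0
    refine ⟨hfk, ?_⟩
    have := h k
    rw [hfk, mul_zero, add_zero] at this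
    exact this
  constructor
  · constructor
    · intro h1
      exact key β hβ fun k => by have := harea k; have := h1 k; linarith
    · intro h2 k
      rw [harea k, (h2 k).1, (h2 k).2, mul_zero]; ring
  · constructor
    · intro h2 k
      rw [hACE k, (h2 k).1, (h2 k).2, mul_zero]; ring
    · intro h3
      exact key b hb fun k => by have := hACE k; have := h3 k; linarith
end

section
/- Let N ≥ 1 and let β₁,…,β_N > 0, with β := ∑_{k=1}^{N} β_k. Let Δf, ΔNI, Δu, ΔPᴸ ∈ ℝᴺ satisfy the synchronism condition Δf₁ = Δf₂ = ⋯ = Δf_N, the net interchange balance condition ∑_{k=1}^{N} ΔNI_k = 0, and the area balance equations Δu_k = ΔNI_k + β_k·Δf_k + ΔPᴸ_k for each k. Then for every k, ΔNI_k = ((β − β_k)/β)·(Δu_k − ΔPᴸ_k) − (β_k/β)·∑_{j≠k} (Δu_j − ΔPᴸ_j). -/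
open Matrix

/-- steady-state net interchange deviation formula. -/
theorem steady_state_net_interchange (N : ℕ) (hN : 1 ≤ N)
    (β Δf ΔNI Δu ΔPL : Fin N → ℝ) (hβ : ∀ k, 0 < β k)
    (βtot : ℝ) (hβtot : βtot = ∑ k, β k)
    (hsync : ∀ k l, Δf k = Δf l)
    (hbal : ∑ k, ΔNI k = 0)
    (harea : ∀ k, Δu k = ΔNI k + β k * Δf k + ΔPL k) :
    ∀ k, ΔNI k = ((βtot - β k) / βtot) * (Δu k - ΔPL k) -
        (β k / βtot) * ∑ j ∈ Finset.univ.erase k, (Δu j - ΔPL j) := by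
  intro k
  have hpos : 0 < βtot := by
    rw [hβtot]
    exact Finset.sum_pos (fun i _ => hβ i) ⟨⟨0, hN⟩, Finset.mem_univ _⟩
  have hS : ∑ j, (Δu j - ΔPL j) = βtot * Δf k := by
    have h : ∀ j, Δu j - ΔPL j = ΔNI j + β j * Δf k := fun j => by
      rw [harea j, hsync j k]; ring
    simp_rw [h]
    rw [Finset.sum_add_distrib, hbal, ← Finset.sum_mul, hβtot]; ring
  have herase : ∑ j ∈ Finset.univ.erase k, (Δu j - ΔPL j)
      = βtot * Δf k - (Δu k - ΔPL k) := by
    rw [← hS, Finset.sum_erase_eq_sub (Finset.mem_univ k)]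
  rw [herase, harea k]
  field_simp
  ring
end

section
/- Let N ≥ 1, let β₁,…,β_N > 0 with β := ∑_{k=1}^{N} β_k, and let b₁,…,b_N > 0. Let Δf, ΔNI, Δu, ΔPᴸ ∈ ℝᴺ satisfy the synchronism condition Δf₁ = Δf₂ = ⋯ = Δf_N, the net interchange balance condition ∑_{k=1}^{N} ΔNI_k = 0, and the area balance equations Δu_k = ΔNI_k + β_k·Δf_k + ΔPᴸ_k for each k. Define ACE_k := ΔNI_k + b_k·Δf_k, and let B := −I_N + (1/β)·(𝛃 − 𝐛)·𝟙ᵀ, where 𝛃 = (β₁,…,β_N), 𝐛 = (b₁,…,b_N), and 𝟙 is the all-ones vector in ℝᴺ. Then ACE = −B·(Δu − ΔPᴸ) as vectors in ℝᴺ; equivalently, for every k, ACE_k = ((β + b_k − β_k)/β)·(Δu_k − ΔPᴸ_k) + ((b_k − β_k)/β)·∑_{j≠k} (Δu_j − ΔPᴸ_j). -/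
open Matrix

/-- steady-state expression of the vector of area control errors,
`ACE = -B (Δu - ΔPᴸ)` with `B = -I + (1/β)(𝛃 - 𝐛)𝟙ᵀ`. -/
theorem steady_state_ace_vector (N : ℕ) (hN : 1 ≤ N)
    (β b Δf ΔNI Δu ΔPL : Fin N → ℝ)
    (hβ : ∀ k, 0 < β k) (hb : ∀ k, 0 < b k)
    (βtot : ℝ) (hβtot : βtot = ∑ k, β k)
    (hsync : ∀ k l, Δf k = Δf l)
    (hbal : ∑ k, ΔNI k = 0)
    (harea : ∀ k, Δu k = ΔNI k + β k * Δf k + ΔPL k)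
    (ACE : Fin N → ℝ) (hACE : ∀ k, ACE k = ΔNI k + b k * Δf k)
    (B : Matrix (Fin N) (Fin N) ℝ)
    (hB : B = -(1 : Matrix (Fin N) (Fin N) ℝ) +
        (1 / βtot) • Matrix.vecMulVec (β - b) (fun _ => 1)) :
    ACE = -(B *ᵥ (Δu - ΔPL)) ∧
    (∀ k, ACE k = ((βtot + b k - β k) / βtot) * (Δu k - ΔPL k) +
        ((b k - β k) / βtot) * ∑ j ∈ Finset.univ.erase k, (Δu j - ΔPL j)) := by
  have hne : Nonempty (Fin N) := ⟨⟨0, hN⟩⟩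
  have hβpos : 0 < βtot := by
    rw [hβtot]
    exact Finset.sum_pos (fun k _ => hβ k) Finset.univ_nonempty
  have hβne : βtot ≠ 0 := ne_of_gt hβpos
  set f : ℝ := Δf ⟨0, hN⟩ with hf
  have hfeq : ∀ k, Δf k = f := fun k => hsync k _
  set v : Fin N → ℝ := Δu - ΔPL with hv
  have hvk : ∀ k, v k = ΔNI k + β k * f := by
    intro k
    simp only [hv, Pi.sub_apply, harea k, hfeq k]
    ring
  have hS : ∑ k, v k = βtot * f := by
    simp only [hvk]
    rw [Finset.sum_add_distrib, hbal, hβtot, ← Finset.sum_mul]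
    ring
  have hACE' : ∀ k, ACE k = v k + (b k - β k) * f := by
    intro k; rw [hACE k, hfeq k, hvk k]; ring
  have hBkj : ∀ k j, B k j = (if k = j then (-1:ℝ) else 0) + (1/βtot) * (β k - b k) := by
    intro k j
    by_cases h : k = j <;>
      simp [hB, Matrix.vecMulVec_apply, Matrix.one_apply, h] <;> ring
  have hmv : ∀ k, (B *ᵥ v) k = -(v k) + (1/βtot) * (β k - b k) * (βtot * f) := by
    intro k
    have : (B *ᵥ v) k = ∑ j, B k j * v j := rfl
    rw [this]
    simp only [hBkj, add_mul]
    rw [Finset.sum_add_distrib]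
    have h1 : ∑ j, (if k = j then (-1:ℝ) else 0) * v j = -(v k) := by
      rw [Finset.sum_eq_single k]
      · simp
      · intro j _ hj; simp [Ne.symm hj]
      · simp
    have h2 : ∑ j, (1/βtot) * (β k - b k) * v j = (1/βtot) * (β k - b k) * (βtot * f) := by
      rw [← Finset.mul_sum, hS]
    rw [h1, h2]
  constructor
  · funext k
    simp only [Pi.neg_apply]
    rw [hACE' k, hmv k]
    field_simp
    ring
  · intro k
    have herase : ∑ j ∈ Finset.univ.erase k, v j = βtot * f - v k := by
      rw [Finset.sum_erase_eq_sub (Finset.mem_univ k), hS]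
    rw [hACE' k]
    have : ∀ j, Δu j - ΔPL j = v j := fun j => rfl
    simp only [this]
    rw [herase]
    field_simp
    ring
end

section
/- Let N ≥ 1, let β₁,…,β_N > 0 with β := ∑_{k=1}^{N} β_k, and let b₁,…,b_N > 0. Then the matrix B := −I_N + (1/β)·(𝛃 − 𝐛)·𝟙ᵀ, where 𝛃 = (β₁,…,β_N), 𝐛 = (b₁,…,b_N), and 𝟙 is the all-ones vector in ℝᴺ, is diagonally stable. -/
/-!
Write `B = -I + c 𝟙ᵀ` and `D = diag d`. For `x ≠ 0` the quadratic form of `-(BᵀD + DB)` is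
`2 (∑ dᵢxᵢ² - (∑ dᵢcᵢxᵢ)(∑ xᵢ))`. Since `∑ dᵢcᵢxᵢ + ∑ xᵢ = ∑ (1 + dᵢcᵢ) xᵢ`, AM-GM and a weighted
Cauchy–Schwarz inequality bound `4 (∑ dᵢcᵢxᵢ)(∑ xᵢ)` by `(∑ (1 + dᵢcᵢ)²/dᵢ)(∑ dᵢxᵢ²)`, so `D` works
as soon as `∑ (1 + dᵢcᵢ)²/dᵢ < 4`. For `cᵢ = (βᵢ - bᵢ)/β` the choice `dᵢ = β/(βᵢ + bᵢ)` gives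
`(1 + dᵢcᵢ)²/dᵢ = 4βᵢ²/(β(βᵢ + bᵢ)) < 4βᵢ/β`, and these bounds sum to `4`.
-/

open Matrix

open Finset

lemma sq_sum_mul_le_sum_sq_div_mul_sum_mul_sq {ι : Type*} (s : Finset ι) {d : ι → ℝ}
    (hd : ∀ i ∈ s, 0 < d i) (u x : ι → ℝ) :
    (∑ i ∈ s, u i * x i) ^ 2 ≤ (∑ i ∈ s, u i ^ 2 / d i) * ∑ i ∈ s, d i * x i ^ 2 :=
  sum_sq_le_sum_mul_sum_of_sq_le_mul s (fun i hi => div_nonneg (sq_nonneg _) (hd i hi).le)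
    (fun i hi => mul_nonneg (hd i hi).le (sq_nonneg _))
    fun i hi => le_of_eq (by field_simp [(hd i hi).ne'])

lemma sum_mul_mul_sum_lt_sum_mul_sq {ι : Type*} [Fintype ι] {d c : ι → ℝ}
    (hd : ∀ i, 0 < d i) (hdc : ∑ i, (1 + d i * c i) ^ 2 / d i < 4) {x : ι → ℝ} (hx : x ≠ 0) :
    (∑ i, d i * c i * x i) * ∑ i, x i < ∑ i, d i * x i ^ 2 := by
  have hS : 0 < ∑ i, d i * x i ^ 2 := by
    obtain ⟨i, hi⟩ := Function.ne_iff.mp hx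
    exact sum_pos' (fun j _ => mul_nonneg (hd j).le (sq_nonneg _))
      ⟨i, mem_univ i, mul_pos (hd i) (sq_pos_of_ne_zero hi)⟩
  have hsum : ∑ i, (1 + d i * c i) * x i = ∑ i, d i * c i * x i + ∑ i, x i := by
    rw [← sum_add_distrib]
    exact sum_congr rfl fun i _ => by ring
  have hCS := sq_sum_mul_le_sum_sq_div_mul_sum_mul_sq univ (fun i _ => hd i)
    (fun i => 1 + d i * c i) x
  rw [hsum] at hCS
  nlinarith [sq_nonneg (∑ i, d i * c i * x i - ∑ i, x i), mul_pos (sub_pos.2 hdc) hS]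

section

variable {ι : Type*} [Fintype ι] [DecidableEq ι]

lemma isHermitian_transpose_mul_diagonal_add_diagonal_mul (A : Matrix ι ι ℝ) (d : ι → ℝ) :
    (Aᵀ * diagonal d + diagonal d * A).IsHermitian := by
  simp [IsHermitian, add_comm]

lemma dotProduct_transpose_mul_diagonal_add_diagonal_mul_mulVec (A : Matrix ι ι ℝ)
    (d x : ι → ℝ) :
    x ⬝ᵥ ((Aᵀ * diagonal d + diagonal d * A) *ᵥ x) = 2 * ((d * x) ⬝ᵥ (A *ᵥ x)) := by
  rw [add_mulVec, dotProduct_add, ← mulVec_mulVec, ← mulVec_mulVec, dotProduct_mulVec,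
    vecMul_transpose]
  simp only [dotProduct, funext (mulVec_diagonal d _), Pi.mul_apply, mul_sum,
    ← sum_add_distrib]
  exact sum_congr rfl fun i _ => by ring

lemma diagonallyStable_of_forall_dotProduct_mulVec_neg {A : Matrix ι ι ℝ} {d : ι → ℝ}
    (hd : ∀ i, 0 < d i) (hA : ∀ x ≠ 0, (d * x) ⬝ᵥ (A *ᵥ x) < 0) : DiagonallyStable A := by
  refine ⟨d, hd, .of_dotProduct_mulVec_pos
    (isHermitian_transpose_mul_diagonal_add_diagonal_mul A d).neg fun x hx => ?_⟩
  rw [neg_mulVec, dotProduct_neg, star_trivial,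
    dotProduct_transpose_mul_diagonal_add_diagonal_mul_mulVec]
  linarith [hA x hx]

lemma diagonallyStable_neg_one_add_vecMulVec_one {c d : ι → ℝ} (hd : ∀ i, 0 < d i)
    (hdc : ∑ i, (1 + d i * c i) ^ 2 / d i < 4) :
    DiagonallyStable (-1 + vecMulVec c fun _ => 1) := by
  refine diagonallyStable_of_forall_dotProduct_mulVec_neg hd fun x hx => ?_
  have h := sum_mul_mul_sum_lt_sum_mul_sq hd hdc hx
  have hq : (d * x) ⬝ᵥ ((-1 + vecMulVec c fun _ => 1) *ᵥ x)
      = (∑ i, d i * c i * x i) * ∑ i, x i - ∑ i, d i * x i ^ 2 := by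
    simp only [add_mulVec, neg_mulVec, one_mulVec, vecMulVec_mulVec, dotProduct, Pi.add_apply,
      Pi.neg_apply, Pi.mul_apply, Pi.smul_apply, MulOpposite.smul_eq_mul_unop, MulOpposite.unop_op, one_mul, sum_mul,
      ← sum_sub_distrib]
    exact sum_congr rfl fun i _ => by ring
  linarith

end

/-- the AGC interconnection matrix `B = -I + (1/β)(𝛃 - 𝐛)𝟙ᵀ` is
diagonally stable for any positive frequency characteristics `βₖ` and biases `bₖ`. -/
theorem agc_matrix_diagonallyStable (N : ℕ) (hN : 1 ≤ N)
    (β b : Fin N → ℝ) (hβ : ∀ k, 0 < β k) (hb : ∀ k, 0 < b k)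
    (βtot : ℝ) (hβtot : βtot = ∑ k, β k)
    (B : Matrix (Fin N) (Fin N) ℝ)
    (hB : B = -(1 : Matrix (Fin N) (Fin N) ℝ) +
        (1 / βtot) • Matrix.vecMulVec (β - b) (fun _ => 1)) :
    DiagonallyStable B := by
  have : Nonempty (Fin N) := ⟨⟨0, hN⟩⟩
  have hβtot_pos : 0 < βtot := hβtot ▸ sum_pos (fun k _ => hβ k) univ_nonempty
  rw [hB, ← smul_vecMulVec]
  refine diagonallyStable_neg_one_add_vecMulVec_one (d := fun k => βtot / (β k + b k))
    (fun k => div_pos hβtot_pos (add_pos (hβ k) (hb k))) ?_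
  calc ∑ k, (1 + βtot / (β k + b k) * ((1 / βtot) • (β - b)) k) ^ 2 / (βtot / (β k + b k))
      < ∑ k, 4 * β k / βtot := sum_lt_sum_of_nonempty univ_nonempty fun k _ => ?_
    _ = 4 := by rw [← sum_div, ← mul_sum, ← hβtot, mul_div_cancel_right₀ _ hβtot_pos.ne']
  have hk : 0 < β k + b k := add_pos (hβ k) (hb k)
  simp only [Pi.smul_apply, Pi.sub_apply, smul_eq_mul]
  field_simp
  nlinarith [mul_pos (hβ k) (hb k)]
end

section
/- Let m ≥ 1, let α₁,…,α_m > 0 with ∑_{i=1}^{m} αᵢ = 1, and let real numbers u̲ᵢ ≤ uᵢ* ≤ ūᵢ for i = 1,…,m with ∑_{i=1}^{m} u̲ᵢ < ∑_{i=1}^{m} ūᵢ. Define satᵢ(v) := min(max(v, u̲ᵢ), ūᵢ), and define φ : ℝ → ℝ by φ(η) = ∑_{i=1}^{m} (satᵢ(uᵢ* + αᵢη) − uᵢ*). Let C := (∑ᵢ(u̲ᵢ − uᵢ*), ∑ᵢ(ūᵢ − uᵢ*)) and P := (minᵢ (u̲ᵢ − uᵢ*)/αᵢ, maxᵢ (ūᵢ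 − uᵢ*)/αᵢ). Then: (i) φ is non-decreasing on ℝ with range equal to the closure of C; and (ii) the restriction of φ to the open interval P is a strictly increasing bijection from P onto C. In particular, for every d ∈ C there exists a unique η̄ ∈ P with φ(η̄) = d. -/
open Matrix

lemma aux_clamp_eq_bot {L U x : ℝ} (hLU : L ≤ U) (h : min (max x L) U = L) :
    x ≤ L ∨ L = U := by
  simp only [min_def, max_def] at h
  split_ifs at h <;> first | (left; linarith) | (right; linarith)

lemma aux_clamp_eq_top {L U x : ℝ} (hLU : L ≤ U) (h : min (max x L) U = U) :
    U ≤ x ∨ L = U := by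
  simp only [min_def, max_def] at h
  split_ifs at h <;> first | (left; linarith) | (right; linarith)

lemma aux_clamp_eq_clamp {L U x y : ℝ} (hLU : L ≤ U) (hxy : x < y)
    (h : min (max x L) U = min (max y L) U) : y ≤ L ∨ U ≤ x ∨ L = U := by
  by_contra hc
  push_neg at hc
  obtain ⟨h1, h2, h3⟩ := hc
  have hLU' : L < U := lt_of_le_of_ne hLU h3
  have e1 : min (max x L) U = max x L := min_eq_left (le_of_lt (max_lt h2 hLU'))
  have e2 : max y L = y := max_eq_left h1.le
  have hlt : max x L < min y U := lt_min (max_lt hxy h1) (max_lt h2 hLU')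
  rw [e1, e2] at h
  rw [h] at hlt
  exact lt_irrefl _ hlt

/-- properties of the saturated allocation map
`φ(η) = ∑ᵢ (satᵢ(uᵢ* + αᵢ η) - uᵢ*)`. -/
theorem allocation_map_properties (m : ℕ) (hm : 1 ≤ m)
    (α ulo ustar uhi : Fin m → ℝ)
    (hα : ∀ i, 0 < α i) (hαsum : ∑ i, α i = 1)
    (hlo : ∀ i, ulo i ≤ ustar i) (hhi : ∀ i, ustar i ≤ uhi i)
    (hne : ∑ i, ulo i < ∑ i, uhi i)
    (φ : ℝ → ℝ)
    (hφ : ∀ η, φ η = ∑ i, (min (max (ustar i + α i * η) (ulo i)) (uhi i) - ustar i))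
    (C P : Set ℝ)
    (hC : C = Set.Ioo (∑ i, (ulo i - ustar i)) (∑ i, (uhi i - ustar i)))
    (hP : P = Set.Ioo
        (Finset.univ.inf' (Finset.univ_nonempty_iff.mpr ⟨⟨0, hm⟩⟩)
          (fun i => (ulo i - ustar i) / α i))
        (Finset.univ.sup' (Finset.univ_nonempty_iff.mpr ⟨⟨0, hm⟩⟩)
          (fun i => (uhi i - ustar i) / α i))) :
    Monotone φ ∧ Set.range φ = closure C ∧
    StrictMonoOn φ P ∧ Set.BijOn φ P C ∧
    ∀ d ∈ C, ∃! η, η ∈ P ∧ φ η = d := by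
  subst hC hP
  have hnempty : (Finset.univ : Finset (Fin m)).Nonempty :=
    Finset.univ_nonempty_iff.mpr ⟨⟨0, hm⟩⟩
  set L : Fin m → ℝ := fun i => ulo i - ustar i with hLdef
  set U : Fin m → ℝ := fun i => uhi i - ustar i with hUdef
  have hL0 : ∀ i, L i ≤ 0 := fun i => by simp only [hLdef]; linarith [hlo i]
  have hU0 : ∀ i, 0 ≤ U i := fun i => by simp only [hUdef]; linarith [hhi i]
  have hLU : ∀ i, L i ≤ U i := fun i => le_trans (hL0 i) (hU0 i)
  set a : ℝ := Finset.univ.inf' (Finset.univ_nonempty_iff.mpr ⟨⟨0, hm⟩⟩)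
      (fun i => L i / α i) with hadef
  set b : ℝ := Finset.univ.sup' (Finset.univ_nonempty_iff.mpr ⟨⟨0, hm⟩⟩)
      (fun i => U i / α i) with hbdef
  have hφ' : ∀ η, φ η = ∑ i, min (max (α i * η) (L i)) (U i) := by
    intro η
    rw [hφ]
    refine Finset.sum_congr rfl fun i _ => ?_
    rw [← min_sub_sub_right, ← max_sub_sub_right, add_sub_cancel_left]
  -- basic facts about a, b
  have haLB : ∀ i, a ≤ L i / α i := fun i => by
    rw [hadef]; exact Finset.inf'_le _ (Finset.mem_univ i)
  have hbUB : ∀ i, U i / α i ≤ b := fun i => by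
    rw [hbdef]; exact Finset.le_sup' (fun i => U i / α i) (Finset.mem_univ i)
  have ha_mul : ∀ i, α i * a ≤ L i := by
    intro i
    have := (le_div_iff₀ (hα i)).mp (haLB i)
    linarith [this]
  have hb_mul : ∀ i, U i ≤ α i * b := by
    intro i
    have := (div_le_iff₀ (hα i)).mp (hbUB i)
    linarith [this]
  have ha0 : a ≤ 0 := le_trans (haLB ⟨0, hm⟩)
    (div_nonpos_iff.mpr (Or.inr ⟨hL0 _, (hα _).le⟩))
  have hb0 : 0 ≤ b := le_trans
    (div_nonneg (hU0 ⟨0, hm⟩) (hα _).le) (hbUB ⟨0, hm⟩)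
  have hsums : ∑ i, L i < ∑ i, U i := by
    simp only [hLdef, hUdef, Finset.sum_sub_distrib]
    linarith [hne]
  have hexj : ∃ j, L j < U j := by
    by_contra hc
    push_neg at hc
    exact absurd (Finset.sum_le_sum fun i _ => hc i) (not_le.mpr hsums)
  obtain ⟨j, hj⟩ := hexj
  have hab : a < b :=
    lt_of_le_of_lt (haLB j)
      (lt_of_lt_of_le ((div_lt_div_iff_of_pos_right (hα j)).mpr hj) (hbUB j))
  -- monotонicity of each term
  have hfmono : ∀ i, Monotone (fun η => min (max (α i * η) (L i)) (U i)) := by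
    intro i x y hxy
    dsimp only
    gcongr
    exact (hα i).le
  have hmono : Monotone φ := by
    intro x y hxy
    rw [hφ', hφ']
    exact Finset.sum_le_sum fun i _ => hfmono i hxy
  have hcont : Continuous φ := by
    have h1 : Continuous fun η : ℝ => ∑ i, min (max (α i * η) (L i)) (U i) :=
      continuous_finset_sum _ fun i _ =>
        ((continuous_const.mul continuous_id).max continuous_const).min continuous_const
    have h2 : φ = fun η => ∑ i, min (max (α i * η) (L i)) (U i) := funext hφ'
    rw [h2]; exact h1
  -- evaluations at the endpoints
  have hφa : φ a = ∑ i, L i := by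
    rw [hφ']
    refine Finset.sum_congr rfl fun i _ => ?_
    rw [max_eq_right (ha_mul i), min_eq_left (hLU i)]
  have hφb : φ b = ∑ i, U i := by
    rw [hφ']
    refine Finset.sum_congr rfl fun i _ => ?_
    rw [min_eq_right (le_max_of_le_left (hb_mul i))]
  -- global bounds
  have hlb : ∀ η, ∑ i, L i ≤ φ η := by
    intro η
    rw [hφ']
    exact Finset.sum_le_sum fun i _ => le_min (le_max_right _ _) (hLU i)
  have hub : ∀ η, φ η ≤ ∑ i, U i := by
    intro η
    rw [hφ']
    exact Finset.sum_le_sum fun i _ => min_le_right _ _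
  -- range
  have hrange : Set.range φ = Set.Icc (∑ i, L i) (∑ i, U i) := by
    ext d
    constructor
    · rintro ⟨η, rfl⟩
      exact ⟨hlb η, hub η⟩
    · intro hd
      have := intermediate_value_Icc hab.le hcont.continuousOn
      rw [hφa, hφb] at this
      obtain ⟨η, -, hη⟩ := this hd
      exact ⟨η, hη⟩
  -- strict monotonicity on (a, b)
  obtain ⟨i0, -, hi0⟩ := Finset.exists_mem_eq_inf' hnempty (fun i => L i / α i)
  obtain ⟨j0, -, hj0⟩ := Finset.exists_mem_eq_sup' hnempty (fun i => U i / α i)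
  have hai0 : a = L i0 / α i0 := hi0
  have hbj0 : b = U j0 / α j0 := hj0
  have hsm : StrictMonoOn φ (Set.Ioo a b) := by
    intro x hx y hy hxy
    by_contra hle
    have heq : φ x = φ y := le_antisymm (hmono hxy.le) (not_lt.mp hle)
    rw [hφ', hφ'] at heq
    have hterm : ∀ i ∈ Finset.univ, min (max (α i * x) (L i)) (U i)
        = min (max (α i * y) (L i)) (U i) :=
      (Finset.sum_eq_sum_iff_of_le (fun i _ => hfmono i hxy.le)).mp heq
    have hx0 : 0 ≤ x := by
      rcases aux_clamp_eq_clamp (hLU i0)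
        (mul_lt_mul_of_pos_left hxy (hα i0)) (hterm i0 (Finset.mem_univ i0)) with h1 | h2 | h3
      · -- y ≤ a, contradiction
        have : y ≤ L i0 / α i0 := (le_div_iff₀ (hα i0)).mpr (by linarith [h1])
        rw [← hai0] at this
        linarith [hx.1]
      · nlinarith [hα i0, hU0 i0]
      · have hL0' : L i0 = 0 := le_antisymm (hL0 i0) (h3 ▸ hU0 i0)
        have : a = 0 := by rw [hai0, hL0', zero_div]
        linarith [hx.1]
    rcases aux_clamp_eq_clamp (hLU j0)
      (mul_lt_mul_of_pos_left hxy (hα j0)) (hterm j0 (Finset.mem_univ j0)) with h1 | h2 | h3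
    · -- α j0 * y ≤ L j0 ≤ 0 so y ≤ 0
      nlinarith [hα j0, hL0 j0]
    · -- x ≥ b, contradiction
      have hxb : U j0 / α j0 ≤ x := (div_le_iff₀ (hα j0)).mpr (by linarith [h2])
      rw [← hbj0] at hxb
      linarith [hx.2]
    · have hU0' : U j0 = 0 := le_antisymm (h3 ▸ hL0 j0) (hU0 j0)
      have : b = 0 := by rw [hbj0, hU0', zero_div]
      linarith [hy.2]
  -- maps to
  have hmaps : Set.MapsTo φ (Set.Ioo a b) (Set.Ioo (∑ i, L i) (∑ i, U i)) := by
    intro x hx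
    constructor
    · by_contra hc
      have heq : ∑ i, L i = ∑ i, min (max (α i * x) (L i)) (U i) := by
        rw [← hφ']
        exact le_antisymm (hlb x) (not_lt.mp hc)
      have hterm : ∀ i ∈ Finset.univ, L i = min (max (α i * x) (L i)) (U i) :=
        (Finset.sum_eq_sum_iff_of_le
          (fun i _ => le_min (le_max_right _ _) (hLU i))).mp heq
      have hx0 : 0 < x := by
        rcases aux_clamp_eq_bot (hLU i0) (hterm i0 (Finset.mem_univ i0)).symm with h1 | h2
        · have : x ≤ L i0 / α i0 := (le_div_iff₀ (hα i0)).mpr (by linarith [h1])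
          rw [← hai0] at this
          linarith [hx.1]
        · have hL0' : L i0 = 0 := le_antisymm (hL0 i0) (h2 ▸ hU0 i0)
          have : a = 0 := by rw [hai0, hL0', zero_div]
          linarith [hx.1]
      rcases aux_clamp_eq_bot (hLU j) (hterm j (Finset.mem_univ j)).symm with h1 | h2
      · nlinarith [hα j, hL0 j]
      · exact absurd h2 hj.ne
    · by_contra hc
      have heq : ∑ i, min (max (α i * x) (L i)) (U i) = ∑ i, U i := by
        rw [← hφ']
        exact le_antisymm (hub x) (not_lt.mp hc)
      have hterm : ∀ i ∈ Finset.univ, min (max (α i * x) (L i)) (U i) = U i :=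
        (Finset.sum_eq_sum_iff_of_le (fun i _ => min_le_right _ _)).mp heq
      have hx0 : x < 0 := by
        rcases aux_clamp_eq_top (hLU j0) (hterm j0 (Finset.mem_univ j0)) with h1 | h2
        · have : U j0 / α j0 ≤ x := (div_le_iff₀ (hα j0)).mpr (by linarith [h1])
          rw [← hbj0] at this
          linarith [hx.2]
        · have hU0' : U j0 = 0 := le_antisymm (h2 ▸ hL0 j0) (hU0 j0)
          have : b = 0 := by rw [hbj0, hU0', zero_div]
          linarith [hx.2]
      rcases aux_clamp_eq_top (hLU j) (hterm j (Finset.mem_univ j)) with h1 | h2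
      · nlinarith [hα j, hU0 j]
      · exact absurd h2 hj.ne
  -- surjectivity
  have hsurj : Set.SurjOn φ (Set.Ioo a b) (Set.Ioo (∑ i, L i) (∑ i, U i)) := by
    intro d hd
    have := intermediate_value_Icc hab.le hcont.continuousOn
    rw [hφa, hφb] at this
    obtain ⟨η, hη, hηd⟩ := this ⟨hd.1.le, hd.2.le⟩
    have h1 : a < η := by
      rcases lt_or_eq_of_le hη.1 with h | h
      · exact h
      · exfalso; rw [← h] at hηd; rw [hφa] at hηd; exact absurd (hηd ▸ hd.1) (lt_irrefl _)
    have h2 : η < b := by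
      rcases lt_or_eq_of_le hη.2 with h | h
      · exact h
      · exfalso; rw [h] at hηd; rw [hφb] at hηd; exact absurd (hηd ▸ hd.2) (lt_irrefl _)
    exact ⟨η, ⟨h1, h2⟩, hηd⟩
  have hbij : Set.BijOn φ (Set.Ioo a b) (Set.Ioo (∑ i, L i) (∑ i, U i)) :=
    ⟨hmaps, hsm.injOn, hsurj⟩
  refine ⟨hmono, ?_, hsm, hbij, ?_⟩
  · rw [hrange, closure_Ioo hsums.ne]
  · intro d hd
    obtain ⟨η, hη, hηd⟩ := hsurj hd
    exact ⟨η, ⟨hη, hηd⟩, fun y ⟨hy, hyd⟩ => hsm.injOn hy hη (hyd.trans hηd.symm)⟩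
end

section
/- Let N ≥ 1, let β₁,…,β_N > 0 with β := ∑_{k=1}^{N} β_k, and let κ > 0. Define Q := β·diag(1/β₁,…,1/β_N) − (1−κ)·𝟙𝟙ᵀ, where 𝟙 is the all-ones vector in ℝᴺ. Then Q is positive definite. Consequently, with b_k = κ·β_k for all k, the matrix B := −I_N + (1/β)·(𝛃 − 𝐛)·𝟙ᵀ (where 𝛃 = (β₁,…,β_N), 𝐛 = (b₁,…,b_N)) and the diagonal matrix D := diag(β/β₁,…,β/β_N) satisfy BᵀD + DB = −2Q ≺ 0; in particular, B is diagonally stable with certificate D. -/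
/-!
The quadratic form of `Q` is `x ↦ β ∑ₖ xₖ² / βₖ - (1 - κ) (∑ₖ xₖ)²`, and by Cauchy–Schwarz
(Sedrakyan's form) `(∑ₖ xₖ)² ≤ β ∑ₖ xₖ² / βₖ`, so it is positive as soon as `1 - κ < 1`.
With `b = κ β` the product `D B` is exactly `-Q`; since `D` and `Q` are symmetric,
`Bᵀ D = (D B)ᵀ = -Q` as well, whence `Bᵀ D + D B = -2Q`.
-/

open Matrix

section
variable {ι : Type*} [Fintype ι] [DecidableEq ι]

theorem dotProduct_mulVec_smul_diagonal_inv_sub_smul_vecMulVec_one (s c : ℝ) (w x : ι → ℝ) :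
    x ⬝ᵥ (s • diagonal (fun k => (w k)⁻¹) - c • vecMulVec (fun _ => 1) (fun _ => 1)) *ᵥ x
      = s * ∑ k, x k ^ 2 / w k - c * (∑ k, x k) ^ 2 := by
  rw [sub_mulVec, dotProduct_sub, smul_mulVec, smul_mulVec, dotProduct_smul, dotProduct_smul,
    smul_eq_mul, smul_eq_mul]
  congr 2
  · simp only [dotProduct, mulVec_diagonal]
    exact Finset.sum_congr rfl fun k _ => by ring
  · simp only [dotProduct, mulVec, vecMulVec_apply, one_mul, mul_one, sq, Finset.sum_mul]

theorem posDef_sum_smul_diagonal_inv_sub_smul_vecMulVec_one {w : ι → ℝ} (hw : ∀ k, 0 < w k)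
    {c : ℝ} (hc : c < 1) :
    ((∑ k, w k) • diagonal (fun k => (w k)⁻¹) -
      c • vecMulVec (fun _ => 1) (fun _ => 1)).PosDef := by
  refine posDef_iff_dotProduct_mulVec.mpr ⟨?_, fun x hx => ?_⟩
  · exact ((isHermitian_diagonal _).smul (.all _)).sub
      ((posSemidef_vecMulVec_self_star _).isHermitian.smul (.all _))
  obtain ⟨k, hk⟩ := Function.ne_iff.mp hx
  have hsum : 0 < ∑ k, w k := Finset.sum_pos (fun k _ => hw k) ⟨k, Finset.mem_univ k⟩
  have hT : 0 < ∑ k, x k ^ 2 / w k :=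
    Finset.sum_pos' (fun i _ => div_nonneg (sq_nonneg _) (hw i).le)
      ⟨k, Finset.mem_univ k, div_pos (sq_pos_of_ne_zero hk) (hw k)⟩
  have hCS : (∑ k, x k) ^ 2 ≤ (∑ k, w k) * ∑ k, x k ^ 2 / w k := by
    rw [← div_le_iff₀' hsum]
    exact Finset.sq_sum_div_le_sum_sq_div _ _ fun k _ => hw k
  rw [star_trivial, dotProduct_mulVec_smul_diagonal_inv_sub_smul_vecMulVec_one]
  rcases le_or_gt c 0 with hc0 | hc0
  · nlinarith [mul_pos hsum hT, sq_nonneg (∑ k, x k)]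
  · nlinarith [mul_pos hsum hT]

theorem diagonal_div_mul_neg_one_add_smul_vecMulVec {s : ℝ} (hs : s ≠ 0) {w : ι → ℝ}
    (hw : ∀ k, w k ≠ 0) (κ : ℝ) :
    diagonal (fun k => s / w k) * (-1 + (1 / s) • vecMulVec (w - κ • w) (fun _ => 1))
      = -(s • diagonal (fun k => (w k)⁻¹) - (1 - κ) • vecMulVec (fun _ => 1) (fun _ => 1)) := by
  ext i j
  have hwi := hw i
  simp only [diagonal_mul, Matrix.add_apply, Matrix.neg_apply, Matrix.smul_apply,
    Matrix.sub_apply, one_apply, diagonal_apply, vecMulVec_apply, Pi.sub_apply, Pi.smul_apply,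
    smul_eq_mul]
  split_ifs <;> field_simp <;> ring

end

/-- with the uniform bias tuning `bₖ = κ βₖ`, the matrix
`Q = β diag(1/βₖ) - (1-κ) 𝟙𝟙ᵀ` is positive definite and certifies diagonal
stability of `B` via `D = diag(β/βₖ)`: `Bᵀ D + D B = -2Q ≺ 0`. -/
theorem agc_uniform_bias_certificate (N : ℕ) (hN : 1 ≤ N)
    (β : Fin N → ℝ) (hβ : ∀ k, 0 < β k)
    (βtot : ℝ) (hβtot : βtot = ∑ k, β k)
    (κ : ℝ) (hκ : 0 < κ)
    (b : Fin N → ℝ) (hb : ∀ k, b k = κ * β k)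
    (Q B D : Matrix (Fin N) (Fin N) ℝ)
    (hQ : Q = βtot • Matrix.diagonal (fun k => (β k)⁻¹) -
        (1 - κ) • Matrix.vecMulVec (fun _ => 1) (fun _ => 1))
    (hB : B = -(1 : Matrix (Fin N) (Fin N) ℝ) +
        (1 / βtot) • Matrix.vecMulVec (β - b) (fun _ => 1))
    (hD : D = Matrix.diagonal (fun k => βtot / β k)) :
    Q.PosDef ∧ Bᵀ * D + D * B = -((2 : ℝ) • Q) ∧ (-(Bᵀ * D + D * B)).PosDef := by
  obtain rfl : b = κ • β := funext hb
  have hβtot_ne : βtot ≠ 0 :=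
    hβtot ▸ (Finset.sum_pos (fun k _ => hβ k) ⟨⟨0, hN⟩, Finset.mem_univ _⟩).ne'
  have hQpd : Q.PosDef := hQ ▸ hβtot ▸
    posDef_sum_smul_diagonal_inv_sub_smul_vecMulVec_one hβ (by linarith)
  have hDB : D * B = -Q := by
    rw [hD, hB, hQ]
    exact diagonal_div_mul_neg_one_add_smul_vecMulVec hβtot_ne (fun k => (hβ k).ne') κ
  have hBD : Bᵀ * D = -Q := by
    rw [hD, ← diagonal_transpose, ← transpose_mul, ← hD, hDB, transpose_neg,
      isHermitian_iff_isSymm.mp hQpd.isHermitian]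
  have hsum : Bᵀ * D + D * B = -((2 : ℝ) • Q) := by
    rw [hBD, hDB, two_smul, neg_add]
  exact ⟨hQpd, hsum, by simpa only [hsum, neg_neg] using hQpd.smul two_pos⟩
end

section
/- Let p ≥ 1 and let M = diag(m₁,…,m_p) be a diagonal matrix with mᵢ > 0 for all i. Then M − 𝟙_p 𝟙_pᵀ is positive definite if and only if ∑_{i=1}^{p} 1/mᵢ < 1, where 𝟙_p is the all-ones vector in ℝᵖ. -/
open Matrix

/-!
Testing positivity of `x ↦ ∑ mᵢ xᵢ² - (∑ uᵢ xᵢ)²` (with `u = 𝟙`): by the weighted Cauchy–Schwarz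
inequality `(∑ uᵢ xᵢ)² ≤ (∑ uᵢ² / mᵢ) (∑ mᵢ xᵢ²)` the form is positive once `S = ∑ uᵢ² / mᵢ < 1`,
and conversely at the Cauchy–Schwarz extremal vector `xᵢ = uᵢ / mᵢ` it takes the value `S - S²`.
-/

namespace Matrix

variable {n : Type*} [Fintype n] [DecidableEq n]

lemma dotProduct_diagonal_sub_vecMulVec_mulVec (m u x : n → ℝ) :
    star x ⬝ᵥ ((diagonal m - vecMulVec u u) *ᵥ x) = ∑ i, m i * x i ^ 2 - (u ⬝ᵥ x) ^ 2 := by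
  rw [star_trivial, sub_mulVec, dotProduct_sub, vecMulVec_mulVec, dotProduct_smul, op_smul_eq_smul,
    smul_eq_mul, dotProduct_comm x u, ← sq]
  congr 1
  exact Finset.sum_congr rfl fun i _ => by rw [mulVec_diagonal]; ring

omit [DecidableEq n] in
lemma sq_dotProduct_le_mul_sum {m : n → ℝ} (hm : ∀ i, 0 < m i) (u x : n → ℝ) :
    (u ⬝ᵥ x) ^ 2 ≤ (∑ i, u i ^ 2 / m i) * ∑ i, m i * x i ^ 2 :=
  Finset.sum_sq_le_sum_mul_sum_of_sq_le_mul _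
    (fun i _ => div_nonneg (sq_nonneg _) (hm i).le)
    (fun i _ => mul_nonneg (hm i).le (sq_nonneg _))
    (fun i _ => (by field_simp [(hm i).ne'] : (u i * x i) ^ 2 = _).le)

theorem posDef_diagonal_sub_vecMulVec_self_iff {m : n → ℝ} (hm : ∀ i, 0 < m i) (u : n → ℝ) :
    (diagonal m - vecMulVec u u).PosDef ↔ ∑ i, u i ^ 2 / m i < 1 := by
  set S := ∑ i, u i ^ 2 / m i
  rw [posDef_iff_dotProduct_mulVec]
  simp only [dotProduct_diagonal_sub_vecMulVec_mulVec]
  constructor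
  · rintro ⟨-, hpos⟩
    by_contra! hS
    set x : n → ℝ := fun i => u i / m i
    have hux : u ⬝ᵥ x = S :=
      Finset.sum_congr rfl fun i _ => by simp only [x]; ring
    have hmx : ∑ i, m i * x i ^ 2 = S :=
      Finset.sum_congr rfl fun i _ => by simp only [x]; field_simp [(hm i).ne']
    have hx : x ≠ 0 := fun h => by
      rw [h, dotProduct_zero] at hux
      linarith
    have hQ := hpos hx
    rw [hux, hmx] at hQ
    nlinarith
  · intro hS
    refine ⟨(isHermitian_diagonal m).sub ?_, fun x hx => ?_⟩
    · simpa only [star_trivial] using (posSemidef_vecMulVec_self_star u).isHermitian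
    obtain ⟨i, hi⟩ := Function.ne_iff.mp hx
    have hmx : 0 < ∑ i, m i * x i ^ 2 :=
      Finset.sum_pos' (fun j _ => mul_nonneg (hm j).le (sq_nonneg _))
        ⟨i, Finset.mem_univ _, mul_pos (hm i) (pow_two_pos_of_ne_zero hi)⟩
    refine sub_pos.mpr ?_
    calc (u ⬝ᵥ x) ^ 2 ≤ S * ∑ i, m i * x i ^ 2 := sq_dotProduct_le_mul_sum hm u x
      _ < ∑ i, m i * x i ^ 2 := mul_lt_of_lt_one_left hmx hS

end Matrix

theorem diagonal_sub_ones_posDef_iff_general (p : ℕ)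
    (m : Fin p → ℝ) (hm : ∀ i, 0 < m i) :
    (Matrix.diagonal m - Matrix.vecMulVec (fun _ => 1) (fun _ => 1)).PosDef ↔
      ∑ i, (m i)⁻¹ < 1 := by
  simpa only [one_pow, one_div] using posDef_diagonal_sub_vecMulVec_self_iff hm fun _ => 1

/-- for a positive diagonal matrix `M = diag(m)`, the matrix
`M - 𝟙𝟙ᵀ` is positive definite iff `∑ᵢ 1/mᵢ < 1`. -/
theorem diagonal_sub_ones_posDef_iff (p : ℕ) (hp : 1 ≤ p)
    (m : Fin p → ℝ) (hm : ∀ i, 0 < m i) :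
    (Matrix.diagonal m - Matrix.vecMulVec (fun _ => 1) (fun _ => 1)).PosDef ↔
      ∑ i, (m i)⁻¹ < 1 :=
  diagonal_sub_ones_posDef_iff_general p m hm
end
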